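/- arXiv:1101.0334 — 12 statements merged into one kernel-verified Lean document; each statement's English description precedes it below -/
import Mathlib

section
/- Let p, m, n, r be positive integers with p ≥ m ≥ n ≥ 3 and r ≤ n(n−1)/2. Then e(n,r;p) ≤ e(m, e(n,r;m); p). -/
open SimpleGraph

/-- The number of edges of a simple graph. -/
noncomputable def edgeCount {V : Type*} (G : SimpleGraph V) : ℕ := Nat.card G.edgeSet

/-- The degree of a vertex in a simple graph. -/
noncomputable def degreeCount {V : Type*} (G : SimpleGraph V) (v : V) : ℕ := Nat.card (G.neighborSet v)

/-- A finset of vertices is independent in `G`. -/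
def IsIndepFinset {V : Type*} (G : SimpleGraph V) (s : Finset V) : Prop :=
  ∀ u ∈ s, ∀ v ∈ s, u ≠ v → ¬ G.Adj u v

/-- The independence number of a simple graph. -/
noncomputable def indepNum' {V : Type*} (G : SimpleGraph V) : ℕ :=
  sSup {n | ∃ s : Finset V, IsIndepFinset G s ∧ s.card = n}

/-- `G` contains a subgraph isomorphic to `H`, i.e. there is an injective
graph homomorphism from `H` to `G`. -/
def ContainsCopy {V W : Type*} (G : SimpleGraph V) (H : SimpleGraph W) : Prop :=
  ∃ f : H →g G, Function.Injective f

/-- `G` contains no subgraph isomorphic to any graph in the family `L`. -/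
def FamilyFree {V : Type*} (L : Set (Σ n : ℕ, SimpleGraph (Fin n))) (G : SimpleGraph V) : Prop :=
  ∀ H ∈ L, ¬ ContainsCopy G H.2

/-- `ex(p; L)`: the maximal number of edges in a graph of order `p`
containing no subgraph isomorphic to a member of `L`. -/
noncomputable def exNum (p : ℕ) (L : Set (Σ n : ℕ, SimpleGraph (Fin n))) : ℕ :=
  sSup {m | ∃ G : SimpleGraph (Fin p), FamilyFree L G ∧ edgeCount G = m}

/-- `G` is an `(n,m)` graph: every subgraph induced by `n` vertices has at most `m` edges. -/
def IsNMGraph {V : Type*} (n m : ℕ) (G : SimpleGraph V) : Prop :=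
  ∀ s : Finset V, s.card = n → edgeCount (G.induce (↑s : Set V)) ≤ m

/-- `e(n,m;p)`: the maximal number of edges in an `(n,m)` graph of order `p`. -/
noncomputable def maxEdgesNM (n m p : ℕ) : ℕ :=
  sSup {e | ∃ G : SimpleGraph (Fin p), IsNMGraph n m G ∧ edgeCount G = e}

/-- The Ramsey property for `R(n,r;k,s)` at order `p`: every graph `G` of order `p`
either contains a subgraph induced by `n` vertices with at most `r-1` edges, or its
complement contains a subgraph induced by `k` vertices with at most `s-1` edges. -/
def RamseyProp (n r k s p : ℕ) : Prop :=
  ∀ G : SimpleGraph (Fin p),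
    (∃ t : Finset (Fin p), t.card = n ∧ edgeCount (G.induce (↑t : Set (Fin p))) ≤ r - 1) ∨
    (∃ t : Finset (Fin p), t.card = k ∧ edgeCount ((Gᶜ).induce (↑t : Set (Fin p))) ≤ s - 1)

/-- The generalized Ramsey number `R(n,r;k,s)`. -/
noncomputable def genRamsey (n r k s : ℕ) : ℕ :=
  sInf {p | 0 < p ∧ RamseyProp n r k s p}

/-- `G` satisfies the `(k,s)` condition: every subgraph induced by `k` vertices
has at least `s` edges. -/
def KSCondition {V : Type*} (k s : ℕ) (G : SimpleGraph V) : Prop :=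
  ∀ t : Finset V, t.card = k → s ≤ edgeCount (G.induce (↑t : Set V))



lemma edgeCount_le_card {V : Type*} [Finite V] (G : SimpleGraph V) :
    edgeCount G ≤ Nat.card (Sym2 V) :=
  Nat.card_le_card_of_injective (Subtype.val : G.edgeSet → Sym2 V) Subtype.val_injective

lemma edgeCount_le_of_hom {V W : Type*} [Finite W] {A : SimpleGraph V} {B : SimpleGraph W}
    (f : A →g B) (hf : Function.Injective f) : edgeCount A ≤ edgeCount B :=
  Nat.card_le_card_of_injective f.mapEdgeSet (SimpleGraph.Hom.mapEdgeSet.injective f hf)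

lemma edgeCount_congr {V W : Type*} {A : SimpleGraph V} {B : SimpleGraph W}
    (e : A ≃g B) : edgeCount A = edgeCount B :=
  Nat.card_congr e.mapEdgeSet

lemma key (p m n r : ℕ) (hmp : m ≤ p) {G : SimpleGraph (Fin p)}
    (hG : IsNMGraph n r G) : IsNMGraph m (maxEdgesNM n r m) G := by
  intro s hs
  -- build copy on Fin m
  set e : (↥s) ≃ Fin m := s.equivFinOfCardEq hs with he
  set f : Fin m → Fin p := fun i => ((e.symm i : ↥s) : Fin p) with hf
  have hfinj : Function.Injective f := by
    intro a b hab
    apply e.symm.injective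
    exact Subtype.val_injective hab
  set H : SimpleGraph (Fin m) := G.comap f with hH
  have iso : H ≃g (G.induce (↑s : Set (Fin p))) :=
    ⟨e.symm, Iff.rfl⟩
  have hHnm : IsNMGraph n r H := by
    intro t ht
    have hcard : (t.image f).card = n := by
      rw [Finset.card_image_of_injective _ hfinj, ht]
    have hhom : ∃ g : (H.induce (↑t : Set (Fin m))) →g (G.induce (↑(t.image f) : Set (Fin p))),
        Function.Injective g := by
      refine ⟨⟨fun x => ⟨f x.1, by
        simp only [Finset.coe_image, Set.mem_image]
        exact ⟨x.1, x.2, rfl⟩⟩, ?_⟩, ?_⟩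
      · intro a b hab
        exact hab
      · intro a b hab
        have h2 := congrArg Subtype.val hab
        exact Subtype.ext (hfinj h2)
    obtain ⟨g, hg⟩ := hhom
    exact le_trans (edgeCount_le_of_hom g hg) (hG _ hcard)
  have hmem : edgeCount H ∈ {e | ∃ G : SimpleGraph (Fin m), IsNMGraph n r G ∧ edgeCount G = e} :=
    ⟨H, hHnm, rfl⟩
  have hbdd : BddAbove {e | ∃ G : SimpleGraph (Fin m), IsNMGraph n r G ∧ edgeCount G = e} := by
    refine ⟨Nat.card (Sym2 (Fin m)), ?_⟩
    rintro x ⟨K, _, rfl⟩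
    exact edgeCount_le_card K
  calc edgeCount (G.induce (↑s : Set (Fin p))) = edgeCount H := (edgeCount_congr iso).symm
    _ ≤ maxEdgesNM n r m := le_csSup hbdd hmem

theorem stmt_2 (p m n r : ℕ) (hr0 : 0 < r) (hn : 3 ≤ n) (hnm : n ≤ m) (hmp : m ≤ p)
    (hr : r ≤ n * (n - 1) / 2) :
    maxEdgesNM n r p ≤ maxEdgesNM m (maxEdgesNM n r m) p := by
  apply csSup_le_csSup
  · refine ⟨Nat.card (Sym2 (Fin p)), ?_⟩
    rintro x ⟨K, _, rfl⟩
    exact edgeCount_le_card K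
  · have hbot : edgeCount (⊥ : SimpleGraph (Fin p)) = 0 := by
      rw [edgeCount, SimpleGraph.edgeSet_bot]; simp
    refine ⟨0, ⊥, fun s hs => ?_, hbot⟩
    have hind : (⊥ : SimpleGraph (Fin p)).induce (↑s) = ⊥ := by ext a b; simp
    rw [hind]
    have : edgeCount (⊥ : SimpleGraph (↑(↑s : Set (Fin p)))) = 0 := by
      rw [edgeCount, SimpleGraph.edgeSet_bot]; simp
    omega
  · rintro x ⟨K, hK, rfl⟩
    exact ⟨K, key p m n r hmp hK, rfl⟩
end

section
/- Let p, n, k be positive integers with p ≥ n > k, and let G be a simple graph of order p. If e(G) < ⌊p/k⌋·p − (⌊p/k⌋(⌊p/k⌋+1)/2)·k, then G contains a subgraph induced by n vertices with at most ⌊n/k⌋·(n − (⌊n/k⌋+1)·k/2) − 1 edges. -/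
open SimpleGraph

set_option linter.unusedSectionVars false

open Finset

private def FF (k x : ℕ) : ℕ := x / k * x - x / k * (x / k + 1) / 2 * k

private 
lemma two_FF {k x : ℕ} (hk : 0 < k) (hkx : k ≤ x) :
    2 * FF k x + x / k * (x / k + 1) * k = 2 * (x / k * x) := by
  set q := x / k with hq
  have hq1 : 1 ≤ q := (Nat.one_le_div_iff hk).mpr hkx
  have he : 2 * (q * (q + 1) / 2) = q * (q + 1) :=
    Nat.two_mul_div_two_of_even (Nat.even_mul_succ_self q)
  have hqk : q * k ≤ x := Nat.div_mul_le_self x k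
  have hB : 2 * (q * (q + 1) / 2 * k) = q * (q + 1) * k := by
    calc 2 * (q * (q + 1) / 2 * k) = 2 * (q * (q + 1) / 2) * k := by ring
    _ = q * (q + 1) * k := by rw [he]
  have hle : q * (q + 1) / 2 * k ≤ q * x := by nlinarith [hB]
  unfold FF
  rw [← hq]
  have key : ∀ A B C : ℕ, B ≤ A → 2 * B = C → 2 * (A - B) + C = 2 * A := by
    intros; omega
  exact key _ _ _ hle hB

private lemma FF_step {k p e d : ℕ} (hk : 0 < k) (hp : k + 2 ≤ p)
    (h1 : e + d < FF k p) (h2 : 2 * (e + d) ≤ p * d) : e < FF k (p - 1) := by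
  set q := p / k with hq
  set r := p % k with hrdef
  have hpqr : k * q + r = p := Nat.div_add_mod p k
  have hr : r < k := Nat.mod_lt _ hk
  have hq1 : 1 ≤ q := (Nat.one_le_div_iff hk).mpr (by omega)
  have hFp : 2 * FF k p + q * (q + 1) * k = 2 * (q * p) := by
    have := two_FF hk (show k ≤ p by omega); rwa [← hq] at this
  clear_value q r
  rcases Nat.eq_zero_or_pos r with hr0 | hr1
  · -- r = 0 : p = k * q, q ≥ 2
    have hq2 : 2 ≤ q := by
      by_contra hcon
      have hq1' : q = 1 := by omega
      rw [hq1'] at hpqr; simp at hpqr; omega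
    obtain ⟨Q, rfl⟩ : ∃ Q, q = Q + 2 := ⟨q - 2, by omega⟩
    have hp3 : p = k * Q + 2 * k := by
      have : k * (Q + 2) = k * Q + 2 * k := by ring
      omega
    have hql : k * (Q + 1) + (k - 1) = p - 1 := by
      have h3 : k * (Q + 2) = k * (Q + 1) + k := by ring
      omega
    have hq'eq : (p - 1) / k = Q + 1 := by
      rw [← hql, Nat.mul_add_div hk, Nat.div_eq_of_lt (by omega)]
    have hFp' : 2 * FF k (p - 1) + (Q + 1) * (Q + 1 + 1) * k = 2 * ((Q + 1) * (p - 1)) := by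
      have := two_FF hk (show k ≤ p - 1 by omega)
      rwa [hq'eq] at this
    obtain ⟨K, rfl⟩ : ∃ K, k = K + 1 := ⟨k - 1, by omega⟩
    have hpm1 : p - 1 = (K + 1) * Q + 2 * K + 1 := by
      have h5 : (K + 1) * Q + 2 * (K + 1) = (K + 1) * Q + 2 * K + 2 := by ring
      omega
    suffices hred : 2 * e + 1 + (Q + 1) * (Q + 1 + 1) * (K + 1) ≤ 2 * ((Q + 1) * (p - 1)) by
      omega
    rw [hpm1]
    rcases le_or_gt (Q + 1) d with hd | hd
    · have hcomb : 2 * (e + d) + 2 + (Q + 2) * (Q + 2 + 1) * (K + 1) ≤ 2 * ((Q + 2) * p) := by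
        omega
      rw [hp3] at hcomb
      linarith only [hcomb, hd]
    · have hpd : (p - 2) * d + 2 * d = p * d := by
        have h4 : p - 2 + 2 = p := by omega
        calc (p - 2) * d + 2 * d = ((p - 2) + 2) * d := by ring
        _ = p * d := by rw [h4]
      have hb2 : (p - 2) * d ≤ (p - 2) * Q := Nat.mul_le_mul_left _ (by omega)
      have hb3 : 2 * e ≤ (p - 2) * Q := by omega
      have hpm2 : p - 2 = (K + 1) * Q + 2 * K := by omega
      rw [hpm2] at hb3
      have hpineq : K + 3 ≤ (K + 1) * Q + 2 * K + 2 := by omega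
      linarith only [hb3, hpineq]
  · -- r ≥ 1
    have hql : k * q + (r - 1) = p - 1 := by omega
    have hq'eq : (p - 1) / k = q := by
      rw [← hql, Nat.mul_add_div hk, Nat.div_eq_of_lt (by omega)]
      omega
    have hFp' : 2 * FF k (p - 1) + q * (q + 1) * k = 2 * (q * (p - 1)) := by
      have := two_FF hk (show k ≤ p - 1 by omega)
      rwa [hq'eq] at this
    have hqp1 : q * (p - 1) + q = q * p := by
      have h4 : p - 1 + 1 = p := by omega
      calc q * (p - 1) + q = q * ((p - 1) + 1) := by ring
      _ = q * p := by rw [h4]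
    rcases le_or_gt q d with hd | hd
    · omega
    · -- d ≤ q - 1
      obtain ⟨Q, rfl⟩ : ∃ Q, q = Q + 1 := ⟨q - 1, by omega⟩
      obtain ⟨R, rfl⟩ : ∃ R, r = R + 1 := ⟨r - 1, by omega⟩
      have hr3 : 3 ≤ (R + 1) * (Q + 2) := by
        rcases le_or_gt 1 Q with h | h
        · nlinarith
        · have hQ0 : Q = 0 := by omega
          subst hQ0
          have hk1 : k * 1 = k := by ring
          have : 2 ≤ R + 1 := by omega
          nlinarith
      have hpd : (p - 2) * d + 2 * d = p * d := by
        have h4 : p - 2 + 2 = p := by omega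
        calc (p - 2) * d + 2 * d = ((p - 2) + 2) * d := by ring
        _ = p * d := by rw [h4]
      have hb2 : (p - 2) * d ≤ (p - 2) * Q := Nat.mul_le_mul_left _ (by omega)
      have hb3 : 2 * e ≤ (p - 2) * Q := by omega
      have hM : (p - 2) + 1 = k * (Q + 1) + R := by omega
      suffices hred : 2 * e + 1 + (Q + 1) * (Q + 1 + 1) * k ≤ 2 * ((Q + 1) * (p - 1)) by
        omega
      have hpm1 : p - 1 = (p - 2) + 1 := by omega
      rw [hpm1, hM]
      set M := p - 2 with hMdef
      clear_value M
      have hMval : M + 1 = k * (Q + 1) + R := hM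
      have hMQ : M * Q + Q = (k * (Q + 1) + R) * Q := by
        calc M * Q + Q = (M + 1) * Q := by ring
        _ = (k * (Q + 1) + R) * Q := by rw [hMval]
      linarith only [hb3, hr3, hMQ, hk]

section Aux

variable {V : Type*} [Fintype V] [DecidableEq V] (G : SimpleGraph V) [DecidableRel G.Adj]

lemma edgeCount_eq_card_edgeFinset {W : Type*} [Fintype W] (H : SimpleGraph W)
    [DecidableEq W] [DecidableRel H.Adj] : edgeCount H = #H.edgeFinset := by
  rw [edgeCount, Nat.card_eq_fintype_card, SimpleGraph.edgeFinset_card]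

lemma degree_induce_eq (s : Finset V) (x : (↑s : Set V)) :
    (G.induce (↑s : Set V)).degree x = #(s.filter fun u => G.Adj ↑x u) := by
  rw [SimpleGraph.degree, SimpleGraph.neighborFinset_eq_filter]
  refine Finset.card_bij' (fun y _ => (↑y : V)) (fun b hb => ⟨b, ?_⟩) ?_ ?_ ?_ ?_
  · simp only [mem_filter] at hb
    simp [hb.1]
  · intro a ha
    simp only [mem_filter, mem_univ, true_and, comap_adj, Function.Embedding.coe_subtype] at ha ⊢
    exact ⟨by simpa using a.2, ha⟩
  · intro a ha
    simp only [mem_filter, mem_univ, true_and, comap_adj, Function.Embedding.coe_subtype]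
    simp only [mem_filter] at ha
    exact ha.2
  · intro a ha; rfl
  · intro a ha; rfl

lemma two_mul_edgeCount_induce (s : Finset V) :
    2 * edgeCount (G.induce (↑s : Set V)) = ∑ v ∈ s, #(s.filter fun u => G.Adj v u) := by
  rw [edgeCount_eq_card_edgeFinset, ← SimpleGraph.sum_degrees_eq_twice_card_edges]
  refine Finset.sum_bij' (fun (x : (↑s : Set V)) (_ : x ∈ univ) => (↑x : V))
    (fun v hv => ⟨v, by simp [hv]⟩) ?_ ?_ ?_ ?_ ?_
  · intro a ha; simpa using a.2
  · intro a ha; simp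
  · intro a ha; rfl
  · intro a ha; rfl
  · intro x hx; exact degree_induce_eq G s x

lemma card_filter_split (p : V → Prop) [DecidablePred p] {s : Finset V} {v : V} (hv : v ∈ s) :
    #(s.filter p) = #((s.erase v).filter p) + if p v then 1 else 0 := by
  rw [Finset.filter_erase]
  by_cases h : p v
  · rw [if_pos h, Finset.card_erase_of_mem (Finset.mem_filter.mpr ⟨hv, h⟩)]
    have : 0 < #(s.filter p) := Finset.card_pos.mpr ⟨v, Finset.mem_filter.mpr ⟨hv, h⟩⟩
    omega
  · rw [if_neg h, Finset.erase_eq_of_notMem (by simp [h]), Nat.add_zero]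

lemma sum_deg_erase {s : Finset V} {v : V} (hv : v ∈ s) :
    ∑ a ∈ s, #(s.filter fun u => G.Adj a u) =
      (∑ a ∈ s.erase v, #((s.erase v).filter fun u => G.Adj a u))
        + 2 * #(s.filter fun u => G.Adj v u) := by
  rw [← Finset.add_sum_erase s _ hv]
  have hstep : ∀ a ∈ s.erase v,
      #(s.filter fun u => G.Adj a u)
        = #((s.erase v).filter fun u => G.Adj a u) + if G.Adj a v then 1 else 0 :=
    fun a _ => card_filter_split _ hv
  rw [Finset.sum_congr rfl hstep, Finset.sum_add_distrib, ← Finset.card_filter]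
  have hflip : (s.erase v).filter (fun a => G.Adj a v) = s.filter (fun u => G.Adj v u) := by
    ext a
    simp only [mem_filter, mem_erase]
    constructor
    · rintro ⟨⟨-, ha⟩, hadj⟩; exact ⟨ha, hadj.symm⟩
    · rintro ⟨ha, hadj⟩
      exact ⟨⟨fun h => G.irrefl (h ▸ hadj), ha⟩, hadj.symm⟩
  rw [hflip]
  ring

lemma edgeCount_erase {s : Finset V} {v : V} (hv : v ∈ s) :
    edgeCount (G.induce (↑s : Set V)) =
      edgeCount (G.induce (↑(s.erase v) : Set V)) + #(s.filter fun u => G.Adj v u) := by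
  have h1 := two_mul_edgeCount_induce G s
  have h2 := two_mul_edgeCount_induce G (s.erase v)
  have h3 := sum_deg_erase G hv
  omega

lemma edgeCount_induce_univ : edgeCount (G.induce (↑(Finset.univ : Finset V) : Set V)) = edgeCount G := by
  have iso : G.induce (↑(Finset.univ : Finset V) : Set V) ≃g G :=
    { toEquiv := Equiv.subtypeUnivEquiv (fun x => Finset.mem_coe.mpr (Finset.mem_univ x)),
      map_rel_iff' := Iff.rfl }
  exact Nat.card_congr iso.mapEdgeSet

end Aux

section Main

variable {V : Type*} [Fintype V] [DecidableEq V] (G : SimpleGraph V) [DecidableRel G.Adj]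

lemma main_ind (n k : ℕ) (hk : 0 < k) (hkn : k < n) :
    ∀ c : ℕ, ∀ s : Finset V, s.card = c → n ≤ c →
      edgeCount (G.induce (↑s : Set V)) < FF k c →
      ∃ t : Finset V, t ⊆ s ∧ t.card = n ∧ edgeCount (G.induce (↑t : Set V)) < FF k n := by
  intro c
  induction c using Nat.strong_induction_on with
  | _ c ih =>
    intro s hcard hnc he
    rcases eq_or_lt_of_le hnc with heq | hlt
    · exact ⟨s, subset_rfl, by omega, by rwa [← heq] at he⟩
    · have hsne : s.Nonempty := Finset.card_pos.mp (by omega)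
      obtain ⟨v, hv, hmax⟩ := Finset.exists_max_image s (fun a => #(s.filter fun u => G.Adj a u)) hsne
      have hsum := two_mul_edgeCount_induce G s
      have hbound : ∑ a ∈ s, #(s.filter fun u => G.Adj a u) ≤ c * #(s.filter fun u => G.Adj v u) := by
        have := Finset.sum_le_card_nsmul s (fun a => #(s.filter fun u => G.Adj a u))
          (#(s.filter fun u => G.Adj v u)) hmax
        simpa [hcard, smul_eq_mul] using this
      have herase := edgeCount_erase G hv
      have hnum : edgeCount (G.induce (↑(s.erase v) : Set V)) < FF k (c - 1) := by
        refine FF_step (d := #(s.filter fun u => G.Adj v u)) hk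
          (show k + 2 ≤ c by omega) (by omega) (by omega)
      obtain ⟨t, hts, htc, hte⟩ := ih (c - 1) (by omega) (s.erase v)
        (by rw [Finset.card_erase_of_mem hv]; omega) (by omega) hnum
      exact ⟨t, hts.trans (Finset.erase_subset _ _), htc, hte⟩

end Main


theorem stmt_3 (p n k : ℕ) (hk : 0 < k) (hkn : k < n) (hnp : n ≤ p)
    {V : Type*} [Fintype V] (hV : Fintype.card V = p) (G : SimpleGraph V)
    (hG : edgeCount G < p / k * p - p / k * (p / k + 1) / 2 * k) :
    ∃ t : Finset V, t.card = n ∧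
      edgeCount (G.induce (↑t : Set V)) ≤ n / k * n - n / k * (n / k + 1) / 2 * k - 1 := by
  classical
  have hG' : edgeCount (G.induce (↑(Finset.univ : Finset V) : Set V)) < FF k p := by
    rw [edgeCount_induce_univ]
    exact hG
  obtain ⟨t, -, htc, hte⟩ := main_ind G n k hk hkn p Finset.univ
    (by rw [Finset.card_univ, hV]) hnp hG'
  exact ⟨t, htc, Nat.le_pred_of_lt hte⟩
end

section
/- Let p, n, k be positive integers with 2 ≤ k+1 ≤ n ≤ 2k and p ≥ n, and let G be a simple graph of order p. If e(G) < ⌊p/k⌋·p − (⌊p/k⌋(⌊p/k⌋+1)/2)·k, then G contains a subgraph induced by n vertices with at most n − k − 1 edges. -/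
open SimpleGraph

section AuxProof
set_option linter.unusedSectionVars false
open Finset

variable {V : Type*} [Fintype V] [DecidableEq V] (G : SimpleGraph V) [DecidableRel G.Adj]

private def auxDeg (s : Finset V) (v : V) : ℕ := (s.filter (G.Adj v)).card

private def auxDD (s : Finset V) : ℕ := ∑ v ∈ s, auxDeg G s v

private lemma auxDeg_eq_sum (s : Finset V) (v : V) :
    auxDeg G s v = ∑ u ∈ s, if G.Adj v u then 1 else 0 := by
  rw [auxDeg, Finset.card_filter]

private lemma auxDD_eq_sum (s : Finset V) :
    auxDD G s = ∑ v ∈ s, ∑ u ∈ s, if G.Adj v u then 1 else 0 := by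
  rw [auxDD]; exact Finset.sum_congr rfl fun v _ => auxDeg_eq_sum G s v

private lemma auxSwap (s t : Finset V) :
    ∑ u ∈ t, auxDeg G s u = ∑ v ∈ s, auxDeg G t v := by
  simp only [auxDeg_eq_sum]
  rw [Finset.sum_comm]
  refine Finset.sum_congr rfl fun v _ => Finset.sum_congr rfl fun u _ => ?_
  exact if_congr (G.adj_comm u v) rfl rfl

private lemma auxDD_insert (t : Finset V) (v : V) (hv : v ∉ t) :
    auxDD G (insert v t) = auxDD G t + 2 * auxDeg G t v := by
  rw [auxDD_eq_sum, Finset.sum_insert hv]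
  have h0 : ∑ u ∈ insert v t, (if G.Adj v u then 1 else 0) = auxDeg G t v := by
    rw [Finset.sum_insert hv, if_neg (G.irrefl), auxDeg_eq_sum, Nat.zero_add]
  rw [h0]
  have h2 : ∀ x ∈ t, (∑ u ∈ insert v t, if G.Adj x u then 1 else 0)
      = (if G.Adj v x then 1 else 0) + ∑ u ∈ t, (if G.Adj x u then 1 else 0) := by
    intro x hx
    rw [Finset.sum_insert hv]
    congr 1
    exact if_congr (G.adj_comm x v) rfl rfl
  rw [Finset.sum_congr rfl h2, Finset.sum_add_distrib, ← auxDeg_eq_sum, ← auxDD_eq_sum]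
  ring

private lemma auxDeg_erase (A : Finset V) (v : V) :
    auxDeg G (A.erase v) v = auxDeg G A v := by
  unfold auxDeg
  congr 1
  ext u
  simp only [Finset.mem_filter, Finset.mem_erase]
  constructor
  · rintro ⟨⟨_, hu⟩, ha⟩; exact ⟨hu, ha⟩
  · rintro ⟨hu, ha⟩; exact ⟨⟨(G.ne_of_adj ha).symm, hu⟩, ha⟩

private lemma auxDeg_split {t A : Finset V} (ht : t ⊆ A) (u : V) :
    auxDeg G A u = auxDeg G t u + auxDeg G (A \ t) u := by
  unfold auxDeg
  rw [← Finset.card_union_of_disjoint, ← Finset.filter_union,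
    Finset.union_sdiff_of_subset ht]
  exact Finset.disjoint_filter_filter (Finset.disjoint_sdiff)

private lemma auxDD_eq_twice_edgeCount (s : Finset V) :
    auxDD G s = 2 * edgeCount (G.induce (↑s : Set V)) := by
  classical
  letI : DecidableRel (G.induce (↑s : Set V)).Adj :=
    fun a b => decidable_of_iff (G.Adj ↑a ↑b) Iff.rfl
  have h1 : edgeCount (G.induce (↑s : Set V)) = (G.induce (↑s : Set V)).edgeFinset.card := by
    rw [edgeCount, Nat.card_eq_fintype_card, SimpleGraph.edgeFinset_card]
  have h2 : ∀ a : (↑s : Set V), (G.induce (↑s : Set V)).degree a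
      = ∑ u ∈ s, if G.Adj ↑a u then 1 else 0 := by
    intro a
    rw [← SimpleGraph.card_neighborFinset_eq_degree, SimpleGraph.neighborFinset_eq_filter,
      Finset.card_filter]
    simp only [SimpleGraph.comap_adj, Function.Embedding.coe_subtype]
    exact (Finset.sum_subtype s (fun x => Iff.symm Finset.mem_coe)
      (fun u => if G.Adj ↑a u then 1 else 0)).symm
  rw [auxDD_eq_sum]
  calc ∑ v ∈ s, ∑ u ∈ s, (if G.Adj v u then 1 else 0)
      = ∑ v : (↑s : Set V), ∑ u ∈ s, (if G.Adj ↑v u then 1 else 0) :=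
        Finset.sum_subtype s (fun x => Iff.symm Finset.mem_coe) _
    _ = ∑ v : (↑s : Set V), (G.induce (↑s : Set V)).degree v :=
        Finset.sum_congr rfl fun a _ => (h2 a).symm
    _ = 2 * (G.induce (↑s : Set V)).edgeFinset.card :=
        SimpleGraph.sum_degrees_eq_twice_card_edges _
    _ = 2 * edgeCount (G.induce (↑s : Set V)) := by rw [h1]

private lemma auxSparse (A : Finset V) (k m : ℕ) (hk : 1 ≤ k) (hm1 : k + 1 ≤ m)
    (hm2 : m ≤ 2 * k) (hmA : m ≤ A.card)
    (hdeg : ∀ v ∈ A, k * (auxDeg G A v + 1) + 1 ≤ A.card) :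
    ∃ t ⊆ A, t.card = m ∧ auxDD G t + 2 * k + 2 ≤ 2 * m := by
  have main : ∀ j, j ≤ m → ∃ t, t ⊆ A ∧ t.card = j ∧
      auxDD G t + 2 * min j (k + 1) ≤ 2 * j := by
    intro j
    induction j with
    | zero => exact fun _ => ⟨∅, Finset.empty_subset _, Finset.card_empty, by simp [auxDD]⟩
    | succ j ihj =>
      intro hjm
      obtain ⟨t, htA, htc, hinv⟩ := ihj (by omega)
      -- we find v ∈ A \ t with a good bound on auxDeg G t v
      have hstep : ∃ v, v ∈ A ∧ v ∉ t ∧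
          auxDD G t + 2 * auxDeg G t v + 2 * min (j + 1) (k + 1) ≤ 2 * (j + 1) := by
        by_cases hjk : j ≤ k
        · -- phase 1 : find a vertex with no neighbour in t
          have hDD0 : auxDD G t = 0 := by
            have : min j (k + 1) = j := by omega
            omega
          have hminj : min j (k+1) = j := by omega
          set P := A.card with hP
          have hP1 : 1 ≤ P := by omega
          set bad := t.biUnion (fun u => insert u (A.filter (G.Adj u))) with hbad
          have hbadcard : bad.card ≤ j * ((P - 1) / k) := by
            calc bad.card ≤ ∑ u ∈ t, (insert u (A.filter (G.Adj u))).card :=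
                Finset.card_biUnion_le
              _ ≤ ∑ u ∈ t, (P - 1) / k := by
                refine Finset.sum_le_sum fun u hu => ?_
                have h1 := hdeg u (htA hu)
                have h2 : (auxDeg G A u + 1) * k ≤ P - 1 := by
                  rw [Nat.mul_comm]; omega
                have h3 : auxDeg G A u + 1 ≤ (P - 1) / k :=
                  (Nat.le_div_iff_mul_le hk).2 h2
                calc (insert u (A.filter (G.Adj u))).card
                    ≤ (A.filter (G.Adj u)).card + 1 := Finset.card_insert_le _ _
                  _ = auxDeg G A u + 1 := rfl
                  _ ≤ (P - 1) / k := h3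
              _ = j * ((P - 1) / k) := by rw [Finset.sum_const, htc, smul_eq_mul]
          have hbadlt : bad.card < A.card := by
            have h4 : j * ((P - 1) / k) ≤ k * ((P - 1) / k) :=
              Nat.mul_le_mul_right _ hjk
            have h5 : ((P - 1) / k) * k ≤ P - 1 := Nat.div_mul_le_self _ _
            have h6 : k * ((P - 1) / k) ≤ P - 1 := by rw [Nat.mul_comm]; exact h5
            omega
          have hnots : ¬ A ⊆ bad := fun hsub => absurd (Finset.card_le_card hsub) (by omega)
          obtain ⟨v, hvA, hvbad⟩ := Finset.not_subset.mp hnots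
          have hvt : v ∉ t := fun h =>
            hvbad (Finset.mem_biUnion.mpr ⟨v, h, Finset.mem_insert_self _ _⟩)
          have hdeg0 : auxDeg G t v = 0 := by
            rw [auxDeg, Finset.card_eq_zero, Finset.filter_eq_empty_iff]
            intro u hu hadj
            exact hvbad (Finset.mem_biUnion.mpr ⟨u, hu, Finset.mem_insert.mpr
              (Or.inr (Finset.mem_filter.mpr ⟨hvA, G.adj_symm hadj⟩))⟩)
          exact ⟨v, hvA, hvt, by omega⟩
        · -- phase 2 : j ≥ k + 1
          push_neg at hjk
          have hmin : min j (k + 1) = k + 1 := by omega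
          have hmin1 : min (j + 1) (k + 1) = k + 1 := by omega
          rw [hmin] at hinv
          by_contra hno
          push_neg at hno
          -- every v ∈ A \ t has many neighbours in t
          obtain ⟨e, he⟩ : ∃ e, auxDD G t = 2 * e :=
            ⟨edgeCount (G.induce (↑t : Set V)), auxDD_eq_twice_edgeCount G t⟩
          have hptwise : ∀ v ∈ A \ t, 2 * j + 2 ≤ auxDD G t + 2 * auxDeg G t v + 2 * k := by
            intro v hv
            have hv1 := Finset.mem_sdiff.mp hv
            have := hno v hv1.1 hv1.2
            rw [hmin1] at this
            omega
          set w := (A \ t).card with hw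
          have hwcard : j + w = A.card := by
            rw [hw, Finset.card_sdiff_of_subset htA, htc]; omega
          have hsum : w * (2 * j + 2) ≤ w * (auxDD G t) + 2 * (∑ v ∈ A \ t, auxDeg G t v)
              + w * (2 * k) := by
            calc w * (2 * j + 2) = ∑ _v ∈ A \ t, (2 * j + 2) := by
                  rw [Finset.sum_const, hw, smul_eq_mul]
              _ ≤ ∑ v ∈ A \ t, (auxDD G t + 2 * auxDeg G t v + 2 * k) :=
                  Finset.sum_le_sum hptwise
              _ = w * (auxDD G t) + 2 * (∑ v ∈ A \ t, auxDeg G t v) + w * (2 * k) := by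
                  rw [Finset.sum_add_distrib, Finset.sum_add_distrib, Finset.sum_const,
                    Finset.sum_const, ← Finset.mul_sum, hw, smul_eq_mul, smul_eq_mul]
          set S := ∑ v ∈ A \ t, auxDeg G t v with hS
          set T := ∑ u ∈ t, auxDeg G A u with hT
          have hsplit : T = auxDD G t + S := by
            rw [hT, hS]
            have h7 : ∀ u ∈ t, auxDeg G A u = auxDeg G t u + auxDeg G (A \ t) u :=
              fun u _ => auxDeg_split G htA u
            rw [Finset.sum_congr rfl h7, Finset.sum_add_distrib, auxDD, auxSwap G (A \ t) t]
          set P := A.card with hP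
          set Ek := (P - 1) / k with hEk
          have hEk1 : 1 ≤ Ek := by
            rw [hEk]
            refine (Nat.one_le_div_iff hk).2 ?_
            omega
          have hTbound : T + j ≤ j * Ek := by
            rw [hT]
            have h8 : ∀ u ∈ t, auxDeg G A u + 1 ≤ Ek := by
              intro u hu
              have h1 := hdeg u (htA hu)
              have h2 : (auxDeg G A u + 1) * k ≤ P - 1 := by rw [Nat.mul_comm]; omega
              exact (Nat.le_div_iff_mul_le hk).2 h2
            calc (∑ u ∈ t, auxDeg G A u) + j = ∑ u ∈ t, (auxDeg G A u + 1) := by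
                  rw [Finset.sum_add_distrib, Finset.sum_const, htc, smul_eq_mul, Nat.mul_one]
              _ ≤ ∑ _u ∈ t, Ek := Finset.sum_le_sum h8
              _ = j * Ek := by rw [Finset.sum_const, htc, smul_eq_mul]
          have hkEk : k * Ek + 1 ≤ P := by
            have h5 : Ek * k ≤ P - 1 := Nat.div_mul_le_self _ _
            have h6 : k * Ek ≤ P - 1 := by rw [Nat.mul_comm]; exact h5
            omega
          -- degenerate case Ek = 1
          rcases Nat.lt_or_ge Ek 2 with hEklt | hEkge
          · have hEkeq : Ek = 1 := by omega
            rw [hEkeq, Nat.mul_one] at hTbound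
            have hT0 : T = 0 := by omega
            have hS0 : S = 0 := by omega
            have hDD0 : auxDD G t = 0 := by omega
            have hw1 : 1 ≤ w := by omega
            obtain ⟨v, hv⟩ := Finset.card_pos.mp (by omega : 0 < (A \ t).card)
            have h9 := hptwise v hv
            have h10 : auxDeg G t v ≤ S := Finset.single_le_sum (fun i _ => Nat.zero_le _) hv
            omega
          · -- main contradiction, via integers
            have hw2 : 2 ≤ w := by
              have h2k : 2 * k ≤ k * Ek := by
                calc 2 * k = k * 2 := Nat.mul_comm _ _
                  _ ≤ k * Ek := Nat.mul_le_mul_left _ hEkge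
              omega
            have hinvz : 2 * e + 2 * k + 2 ≤ 2 * j := by omega
            -- cast to ℤ
            have hz1 : (0:ℤ) ≤ ((w:ℤ) - 2) * (2 * j - 2 * k - 2 - 2 * e) := by
              apply mul_nonneg
              · have : (2:ℤ) ≤ w := by exact_mod_cast hw2
                linarith
              · have : (2:ℤ) * e + 2 * k + 2 ≤ 2 * j := by exact_mod_cast hinvz
                linarith
            have hz2 : (0:ℤ) ≤ ((Ek:ℤ) - 1) * (2 * k - 1 - j) := by
              apply mul_nonneg
              · have : (1:ℤ) ≤ Ek := by exact_mod_cast hEk1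
                linarith
              · have hj2k : j + 1 ≤ 2 * k := by omega
                have : ((j:ℤ)) + 1 ≤ 2 * k := by exact_mod_cast hj2k
                linarith
            have hz3 : (w:ℤ) * (2 * j + 2) ≤ w * (2 * e) + 2 * S + w * (2 * k) := by
              rw [he] at hsum; exact_mod_cast hsum
            have hz4 : (T:ℤ) + j ≤ j * Ek := by exact_mod_cast hTbound
            have hz5 : (T:ℤ) = 2 * e + S := by rw [he] at hsplit; exact_mod_cast hsplit
            have hz6 : (k:ℤ) * Ek + 1 ≤ P := by exact_mod_cast hkEk
            have hz7 : (j:ℤ) + w = P := by exact_mod_cast hwcard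
            have hz8 : (1:ℤ) ≤ Ek := by exact_mod_cast hEk1
            nlinarith [hz1, hz2, hz3, hz4, hz5, hz6, hz7, hz8]
      obtain ⟨v, hvA, hvt, hvgood⟩ := hstep
      refine ⟨insert v t, Finset.insert_subset hvA htA, ?_, ?_⟩
      · rw [Finset.card_insert_of_notMem hvt, htc]
      · rw [auxDD_insert G t v hvt]; omega
  obtain ⟨t, htA, htc, hinv⟩ := main m le_rfl
  have hmm : min m (k + 1) = k + 1 := by omega
  rw [hmm] at hinv
  exact ⟨t, htA, htc, by omega⟩

private lemma auxFval (k : ℕ) (hk : 1 ≤ k) :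
    ∀ x : ℕ, x ≤ 2 * k → (∑ i ∈ Finset.range x, i / k) + min x k = x := by
  intro x
  induction x with
  | zero => simp
  | succ x ihx =>
    intro hx
    rw [Finset.sum_range_succ]
    have hih := ihx (by omega)
    rcases Nat.lt_or_ge x k with h | h
    · have h0 : x / k = 0 := Nat.div_eq_of_lt h
      omega
    · have h1 : 1 ≤ x / k := (Nat.one_le_div_iff hk).2 h
      have h2 : x / k < 2 := (Nat.div_lt_iff_lt_mul hk).2 (by omega)
      have h3 : x / k = 1 := by omega
      omega

private lemma auxFclosedAux (k : ℕ) :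
    ∀ x : ℕ, 2 * (∑ i ∈ Finset.range x, i / k) + (x / k) * (x / k + 1) * k
      = 2 * ((x / k) * x) := by
  intro x
  induction x with
  | zero => simp
  | succ x ih =>
    rw [Finset.sum_range_succ]
    by_cases hdvd : k ∣ (x + 1)
    · have hq : (x + 1) / k = x / k + 1 := Nat.succ_div_of_dvd hdvd
      have hx1 : (x + 1) / k * k = x + 1 := Nat.div_mul_cancel hdvd
      rw [hq] at hx1
      rw [hq]
      zify at ih hx1 ⊢
      linear_combination ih + 2 * hx1
    · have hq : (x + 1) / k = x / k := by rw [Nat.succ_div, if_neg hdvd, Nat.add_zero]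
      rw [hq]
      zify at ih ⊢
      linear_combination ih

private lemma auxFclosed (k p : ℕ) :
    p / k * p - p / k * (p / k + 1) / 2 * k = ∑ i ∈ Finset.range p, i / k := by
  have h := auxFclosedAux k p
  obtain ⟨c, hc⟩ := Nat.even_mul_succ_self (p / k)
  have hc' : p / k * (p / k + 1) = 2 * c := by omega
  have hc2 : p / k * (p / k + 1) / 2 = c := by
    rw [hc', Nat.mul_div_cancel_left c (by norm_num)]
  rw [hc'] at h
  rw [hc2]
  have h2 : (∑ i ∈ Finset.range p, i / k) + c * k = p / k * p := by linarith
  exact Nat.sub_eq_of_eq_add h2.symm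

private lemma auxCore (k n : ℕ) (hk : 1 ≤ k) (hn1 : k + 1 ≤ n) (hn2 : n ≤ 2 * k) :
    ∀ P : ℕ, ∀ A : Finset V, A.card = P → n ≤ P →
      (∀ t, t ⊆ A → t.card = n → 2 * n ≤ auxDD G t + 2 * k) →
      2 * (∑ i ∈ Finset.range P, i / k) ≤ auxDD G A := by
  intro P
  induction P using Nat.strong_induction_on with
  | _ P ih =>
  intro A hA hnP hyp
  rcases eq_or_lt_of_le hnP with heq | hlt
  · -- base case : P = n
    have hF := auxFval k hk P (by omega)
    have hminPk : min P k = k := by omega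
    have h1 := hyp A (subset_refl A) (by omega)
    omega
  · by_cases hbig : ∃ v ∈ A, (P - 1) / k ≤ auxDeg G A v
    · obtain ⟨v, hvA, hvdeg⟩ := hbig
      have hA' : (A.erase v).card = P - 1 := by rw [Finset.card_erase_of_mem hvA, hA]
      have ihres := ih (P - 1) (by omega) (A.erase v) hA' (by omega)
        (fun t hts htc => hyp t (hts.trans (Finset.erase_subset _ _)) htc)
      have hDDA : auxDD G A = auxDD G (A.erase v) + 2 * auxDeg G A v := by
        have h1 : insert v (A.erase v) = A := Finset.insert_erase hvA
        have h2 := auxDD_insert G (A.erase v) v (Finset.notMem_erase v A)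
        rw [h1, auxDeg_erase] at h2
        exact h2
      have hFstep : ∑ i ∈ Finset.range P, i / k
          = (∑ i ∈ Finset.range (P - 1), i / k) + (P - 1) / k := by
        conv_lhs => rw [show P = (P - 1) + 1 by omega]
        rw [Finset.sum_range_succ]
      set d := (P - 1) / k
      set F1 := ∑ i ∈ Finset.range (P - 1), i / k
      omega
    · push_neg at hbig
      have hdeg : ∀ v ∈ A, k * (auxDeg G A v + 1) + 1 ≤ A.card := by
        intro v hv
        have h1 : auxDeg G A v + 1 ≤ (P - 1) / k := hbig v hv
        have h2 : k * (auxDeg G A v + 1) ≤ k * ((P - 1) / k) :=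
          Nat.mul_le_mul_left _ h1
        have h3 : ((P - 1) / k) * k ≤ P - 1 := Nat.div_mul_le_self _ _
        have h4 : k * ((P - 1) / k) ≤ P - 1 := by rw [Nat.mul_comm]; exact h3
        omega
      obtain ⟨t, htA, htc, htD⟩ := auxSparse G A k n hk hn1 hn2 (by omega) hdeg
      have := hyp t htA htc
      omega


end AuxProof

theorem stmt_4 (p n k : ℕ) (hk : 2 ≤ k + 1) (hkn : k + 1 ≤ n) (hn2k : n ≤ 2 * k)
    (hnp : n ≤ p)
    {V : Type*} [Fintype V] (hV : Fintype.card V = p) (G : SimpleGraph V)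
    (hG : edgeCount G < p / k * p - p / k * (p / k + 1) / 2 * k) :
    ∃ t : Finset V, t.card = n ∧
      edgeCount (G.induce (↑t : Set V)) ≤ n - k - 1 := by
  classical
  letI : DecidableRel G.Adj := Classical.decRel _
  by_contra hcon
  push_neg at hcon
  have hk1 : 1 ≤ k := by omega
  have hyp : ∀ t, t ⊆ (Finset.univ : Finset V) → t.card = n →
      2 * n ≤ auxDD G t + 2 * k := by
    intro t _ htc
    have h1 := hcon t htc
    have h2 := auxDD_eq_twice_edgeCount G t
    set e := edgeCount (G.induce (↑t : Set V))
    omega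
  have hcard : (Finset.univ : Finset V).card = p := by rw [Finset.card_univ, hV]
  have hcore := auxCore G k n hk1 hkn hn2k p Finset.univ hcard hnp hyp
  have hDDuniv : auxDD G (Finset.univ : Finset V) = 2 * edgeCount G := by
    have h1 : edgeCount G = G.edgeFinset.card := by
      rw [edgeCount, Nat.card_eq_fintype_card, SimpleGraph.edgeFinset_card]
    rw [h1, ← SimpleGraph.sum_degrees_eq_twice_card_edges, auxDD]
    refine Finset.sum_congr rfl fun v _ => ?_
    rw [auxDeg, ← SimpleGraph.neighborFinset_eq_filter,
      SimpleGraph.card_neighborFinset_eq_degree]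
  rw [auxFclosed k p] at hG
  set F := ∑ i ∈ Finset.range p, i / k
  set eG := edgeCount G
  omega
end

section
/- Let G be a simple graph of order p ≥ 4, and let t be a nonnegative integer with t < p/4 − 3{(p−t)/3}. If e(G) < p + 2t + 6{(p−t)/3}, then α(G) ≥ ⌊(p−t)/3⌋ + 1. -/
open SimpleGraph

private lemma key_lemma : ∀ (n : ℕ) {V : Type*} [Fintype V] (G : SimpleGraph V),
    Fintype.card V = n →
    ∃ s : Finset V, IsIndepFinset G s ∧ 6 * n ≤ 12 * s.card + ∑ v, degreeCount G v := by
  intro n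
  induction n using Nat.strong_induction_on with
  | _ n IH =>
    intro V _ G hcard
    classical
    rcases isEmpty_or_nonempty V with hV | hV
    · refine ⟨∅, by simp [IsIndepFinset], ?_⟩
      have h0 : n = 0 := by rw [← hcard]; exact Fintype.card_eq_zero
      simp [h0]
    · obtain ⟨v, -, hv⟩ := Finset.exists_min_image Finset.univ (degreeCount G)
        ⟨Classical.arbitrary V, Finset.mem_univ _⟩
      set d := degreeCount G v with hd
      have hfin : (G.neighborSet v).Finite := Set.toFinite _
      set Nv : Finset V := insert v hfin.toFinset with hNv
      have hNvcard : Nv.card = d + 1 := by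
        rw [hNv, Finset.card_insert_of_notMem (by simp), hd, degreeCount,
          Nat.card_coe_set_eq, Set.ncard_eq_toFinset_card _ hfin]
      have hAcard : Fintype.card ↥(↑(Nvᶜ) : Set V) + (d + 1) = n := by
        rw [← Nat.card_eq_fintype_card, Nat.card_coe_set_eq, Set.ncard_coe_finset,
          Finset.card_compl, hNvcard, ← hcard]
        have := Finset.card_le_univ Nv
        rw [hNvcard] at this
        omega
      have hlt : Fintype.card ↥(↑(Nvᶜ) : Set V) < n := by omega
      obtain ⟨s', hs'indep, hs'⟩ := IH _ hlt (G.induce (↑(Nvᶜ) : Set V)) rfl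
      set s : Finset V := insert v (s'.map ⟨Subtype.val, Subtype.val_injective⟩) with hs
      have hmem : ∀ u ∈ s'.map ⟨Subtype.val, Subtype.val_injective⟩, u ∉ Nv := by
        intro u hu
        simp only [Finset.mem_map, Function.Embedding.coeFn_mk] at hu
        obtain ⟨w, -, rfl⟩ := hu
        exact Finset.mem_compl.mp w.2
      have hvnot : v ∉ s'.map ⟨Subtype.val, Subtype.val_injective⟩ := by
        intro h
        exact hmem v h (Finset.mem_insert_self _ _)
      have hAadj : ∀ u ∈ s'.map ⟨Subtype.val, Subtype.val_injective⟩, ¬ G.Adj v u := by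
        intro u hu hadj
        exact hmem u hu (by rw [hNv]; exact Finset.mem_insert_of_mem (hfin.mem_toFinset.mpr hadj))
      have hindep : IsIndepFinset G s := by
        intro a ha b hb hab
        rw [hs, Finset.mem_insert] at ha hb
        rcases ha with rfl | ha
        · rcases hb with rfl | hb
          · exact absurd rfl hab
          · exact hAadj b hb
        · rcases hb with rfl | hb
          · intro h; exact hAadj a ha h.symm
          · simp only [Finset.mem_map, Function.Embedding.coeFn_mk] at ha hb
            obtain ⟨a', ha', rfl⟩ := ha
            obtain ⟨b', hb', rfl⟩ := hb
            intro h
            exact hs'indep a' ha' b' hb' (fun e => hab (by rw [e])) h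
      refine ⟨s, hindep, ?_⟩
      have hscard : s.card = s'.card + 1 := by
        rw [hs, Finset.card_insert_of_notMem hvnot, Finset.card_map]
      have hdeg1 : ∀ u : ↥(↑(Nvᶜ) : Set V),
          degreeCount (G.induce (↑(Nvᶜ) : Set V)) u ≤ degreeCount G u.1 := by
        intro u
        apply Nat.card_le_card_of_injective
          (fun w => (⟨w.1.1, w.2⟩ : G.neighborSet u.1))
        intro a b hab
        simp only [Subtype.mk.injEq] at hab
        have h' := congrArg Subtype.val hab
        exact Subtype.ext (Subtype.ext h')
      have hsum1 : ∑ u : ↥(↑(Nvᶜ) : Set V), degreeCount (G.induce (↑(Nvᶜ) : Set V)) u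
          ≤ ∑ x ∈ Nvᶜ, degreeCount G x := by
        calc ∑ u : ↥(↑(Nvᶜ) : Set V), degreeCount (G.induce (↑(Nvᶜ) : Set V)) u
            ≤ ∑ u : ↥(↑(Nvᶜ) : Set V), degreeCount G u.1 :=
              Finset.sum_le_sum (fun u _ => hdeg1 u)
          _ = ∑ x ∈ (↑(Nvᶜ) : Set V).toFinset, degreeCount G x := Finset.sum_set_coe _
          _ = ∑ x ∈ Nvᶜ, degreeCount G x := by rw [Finset.toFinset_coe]
      have hsum2 : (d + 1) * d ≤ ∑ x ∈ Nv, degreeCount G x := by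
        calc (d+1) * d = ∑ _x ∈ Nv, d := by rw [Finset.sum_const, hNvcard, smul_eq_mul]
          _ ≤ ∑ x ∈ Nv, degreeCount G x := Finset.sum_le_sum (fun x _ => hv x (Finset.mem_univ x))
      have htot : (d+1)*d + ∑ u : ↥(↑(Nvᶜ) : Set V), degreeCount (G.induce (↑(Nvᶜ) : Set V)) u
          ≤ ∑ x, degreeCount G x := by
        rw [← Finset.sum_add_sum_compl Nv (degreeCount G)]
        exact Nat.add_le_add hsum2 hsum1
      have harith : 6 * d + 6 ≤ (d + 1) * d + 12 := by
        rcases le_or_gt d 4 with h | h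
        · interval_cases d <;> norm_num
        · have h5 : 5 * d ≤ d * d := Nat.mul_le_mul_right d (by omega)
          have he : (d + 1) * d = d * d + d := by ring
          linarith
      rw [hscard]
      linarith [hs', harith, htot, hAcard]

theorem stmt_5 (p : ℕ) (hp : 4 ≤ p) {V : Type*} [Fintype V] (hV : Fintype.card V = p)
    (G : SimpleGraph V) (t : ℕ)
    (ht : (t : ℚ) < (p : ℚ) / 4 - 3 * Int.fract (((p : ℚ) - (t : ℚ)) / 3))
    (hG : (edgeCount G : ℚ) < (p : ℚ) + 2 * (t : ℚ) + 6 * Int.fract (((p : ℚ) - (t : ℚ)) / 3)) :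
    ⌊((p : ℚ) - (t : ℚ)) / 3⌋ + 1 ≤ (indepNum' G : ℤ) := by
  classical
  obtain ⟨s, hs, hkey⟩ := key_lemma p G hV
  have hhs : ∑ v, degreeCount G v = 2 * edgeCount G := by
    have h1 : ∀ v, degreeCount G v = G.degree v := by
      intro v
      simp [degreeCount, SimpleGraph.degree, SimpleGraph.neighborFinset,
        Nat.card_eq_fintype_card, Set.toFinset_card]
    have h2 : edgeCount G = G.edgeFinset.card := by
      simp [edgeCount, SimpleGraph.edgeFinset, Nat.card_eq_fintype_card, Set.toFinset_card]
    simp_rw [h1, h2]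
    exact G.sum_degrees_eq_twice_card_edges
  have hbdd : BddAbove {n | ∃ s : Finset V, IsIndepFinset G s ∧ s.card = n} := by
    refine ⟨Fintype.card V, fun x hx => ?_⟩
    obtain ⟨u, -, rfl⟩ := hx
    exact (Finset.card_le_univ u).trans_eq Finset.card_univ
  have hle : s.card ≤ indepNum' G := le_csSup hbdd ⟨s, hs, rfl⟩
  rw [hhs] at hkey
  have hfr : Int.fract (((p : ℚ) - (t : ℚ)) / 3)
      = ((p : ℚ) - (t : ℚ)) / 3 - (⌊((p : ℚ) - (t : ℚ)) / 3⌋ : ℚ) := rfl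
  rw [hfr] at hG
  have hQ : (6 : ℚ) * p ≤ 12 * (indepNum' G : ℚ) + 2 * (edgeCount G : ℚ) := by
    have : 6 * p ≤ 12 * indepNum' G + 2 * edgeCount G := by omega
    exact_mod_cast this
  have hlt : ((⌊((p : ℚ) - (t : ℚ)) / 3⌋ : ℚ)) < (indepNum' G : ℚ) := by linarith
  have : (⌊((p : ℚ) - (t : ℚ)) / 3⌋ : ℤ) < (indepNum' G : ℤ) := by exact_mod_cast hlt
  omega
end

section
/- Let G be a simple graph of order p ≥ 4, and let t be a nonnegative integer with 3{(p+t)/3} − p/4 < t ≤ p/2 + 3{(p+t)/3}. If e(G) < p − 2t + 3{(p+t)/3} + max{t, 3{(p+t)/3}}, then α(G) ≥ ⌊(p+t)/3⌋ + 1. -/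
open SimpleGraph

lemma indep_bdd {V : Type*} [Fintype V] (G : SimpleGraph V) :
    BddAbove {n | ∃ s : Finset V, IsIndepFinset G s ∧ s.card = n} := by
  refine ⟨Fintype.card V, ?_⟩
  rintro n ⟨s, -, rfl⟩
  exact s.card_le_univ

lemma card_le_indepNum' {V : Type*} [Fintype V] (G : SimpleGraph V) (s : Finset V)
    (hs : IsIndepFinset G s) : s.card ≤ indepNum' G :=
  le_csSup (indep_bdd G) ⟨s, hs, rfl⟩

lemma indepNum'_mem {V : Type*} [Fintype V] (G : SimpleGraph V) :
    ∃ s : Finset V, IsIndepFinset G s ∧ s.card = indepNum' G := by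
  have hne : {n | ∃ s : Finset V, IsIndepFinset G s ∧ s.card = n}.Nonempty :=
    ⟨0, ∅, by intro u hu; simp at hu, by simp⟩
  exact Nat.sSup_mem hne (indep_bdd G)

universe u

lemma key_s6 : ∀ (n : ℕ) (V : Type u) [Fintype V] (G : SimpleGraph V),
    2 * n * (Nat.card V : ℤ) ≤ 2 * edgeCount G + n * (n + 1) * indepNum' G := by
  intro n
  induction n with
  | zero => intro V _ G; simp
  | succ n ih =>
    intro V _ G
    classical
    obtain ⟨S, hS, hcard⟩ := indepNum'_mem G
    set a := indepNum' G with ha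
    set T : Set V := (↑S : Set V)ᶜ with hTdef
    have hmemT : ∀ v : T, (↑v : V) ∉ S := fun v hv => v.2 (Finset.mem_coe.mpr hv)
    -- every vertex outside S has a neighbor in S
    have hnb : ∀ v : T, ∃ u ∈ S, G.Adj (↑v) u := by
      intro v
      by_contra hcon
      push_neg at hcon
      have hins : IsIndepFinset G (insert (↑v : V) S) := by
        intro x hx y hy hxy hadj
        rcases Finset.mem_insert.1 hx with rfl | hx
        · rcases Finset.mem_insert.1 hy with rfl | hy
          · exact hxy rfl
          · exact hcon y hy hadj
        · rcases Finset.mem_insert.1 hy with rfl | hy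
          · exact hcon x hx hadj.symm
          · exact hS x hx y hy hxy hadj
      have hle := card_le_indepNum' G _ hins
      rw [Finset.card_insert_of_notMem (hmemT v), hcard] at hle
      omega
    choose nb hnbS hnbAdj using hnb
    set G' := G.induce T with hG'
    -- independence number of induced subgraph is at most a
    have hα : indepNum' G' ≤ a := by
      have hne : {n | ∃ s : Finset T, IsIndepFinset G' s ∧ s.card = n}.Nonempty :=
        ⟨0, ∅, by intro u hu; simp at hu, by simp⟩
      refine csSup_le hne ?_
      rintro m ⟨s', hs', rfl⟩
      have himg : IsIndepFinset G (s'.image Subtype.val) := by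
        intro x hx y hy hxy hadj
        obtain ⟨x', hx', rfl⟩ := Finset.mem_image.1 hx
        obtain ⟨y', hy', rfl⟩ := Finset.mem_image.1 hy
        refine hs' x' hx' y' hy' (fun h => hxy (by rw [h])) ?_
        simpa [hG', SimpleGraph.induce, SimpleGraph.comap] using hadj
      have := card_le_indepNum' G _ himg
      rwa [Finset.card_image_of_injective _ Subtype.val_injective] at this
    -- edge counting
    have hedge : (Nat.card T : ℤ) + edgeCount G' ≤ edgeCount G := by
      set A : Set (Sym2 V) := Sym2.map (Subtype.val : T → V) '' G'.edgeSet with hA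
      set B : Set (Sym2 V) := Set.range (fun v : T => s((v : V), nb v)) with hB
      have hAsub : A ⊆ G.edgeSet := by
        rintro x ⟨e, he, rfl⟩
        induction e with
        | _ u v =>
          rw [Sym2.map_pair_eq, SimpleGraph.mem_edgeSet]
          rw [SimpleGraph.mem_edgeSet] at he
          simpa [hG', SimpleGraph.induce, SimpleGraph.comap] using he
      have hBsub : B ⊆ G.edgeSet := by
        rintro x ⟨v, rfl⟩
        exact (hnbAdj v)
      have hAcard : A.ncard = edgeCount G' := by
        rw [hA, Set.ncard_image_of_injective _ (Sym2.map.injective Subtype.val_injective)]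
        rw [edgeCount, Nat.card_coe_set_eq]
      have hBcard : B.ncard = Nat.card T := by
        rw [hB, ← Nat.card_coe_set_eq]
        refine Nat.card_range_of_injective ?_
        intro v w h
        rw [Sym2.eq_iff] at h
        rcases h with ⟨h1, _⟩ | ⟨h1, h2⟩
        · exact Subtype.ext h1
        · exact absurd (h1 ▸ hnbS w) (hmemT v)
      have hdisj : Disjoint A B := by
        rw [Set.disjoint_left]
        rintro x ⟨e, he, rfl⟩ ⟨v, hv⟩
        induction e with
        | _ u w =>
          rw [Sym2.map_pair_eq] at hv
          rw [Sym2.eq_iff] at hv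
          rcases hv with ⟨h1, h2⟩ | ⟨h1, h2⟩
          · exact (hmemT w) (h2 ▸ hnbS v)
          · exact (hmemT u) (h2 ▸ hnbS v)
      have hunion : (A ∪ B).ncard ≤ edgeCount G := by
        rw [edgeCount, Nat.card_coe_set_eq]
        exact Set.ncard_le_ncard (Set.union_subset hAsub hBsub) (Set.toFinite _)
      rw [Set.ncard_union_eq hdisj (Set.toFinite _) (Set.toFinite _)] at hunion
      rw [hAcard, hBcard] at hunion
      omega
    -- cardinality relation
    have hcardT : (Nat.card T : ℤ) + a = Nat.card V := by
      have h1 : (↑S : Set V).ncard + ((↑S : Set V)ᶜ).ncard = Nat.card V :=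
        Set.ncard_add_ncard_compl _
      rw [Set.ncard_coe_finset, hcard, ← hTdef] at h1
      rw [Nat.card_coe_set_eq]
      omega
    -- apply IH
    have hT : Fintype T := Fintype.ofFinite _
    have ihG' := ih T G'
    -- combine
    have hmul : (n : ℤ) * (n + 1) * indepNum' G' ≤ (n : ℤ) * (n + 1) * a := by
      have : (0:ℤ) ≤ (n : ℤ) * (n + 1) := by positivity
      exact mul_le_mul_of_nonneg_left (by exact_mod_cast hα) this
    push_cast at ihG' hedge hcardT ⊢
    nlinarith [ihG', hedge, hcardT, hmul]

theorem stmt_6 (p : ℕ) (hp : 4 ≤ p) {V : Type*} [Fintype V] (hV : Fintype.card V = p)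
    (G : SimpleGraph V) (t : ℕ)
    (ht1 : 3 * Int.fract (((p : ℚ) + (t : ℚ)) / 3) - (p : ℚ) / 4 < (t : ℚ))
    (ht2 : (t : ℚ) ≤ (p : ℚ) / 2 + 3 * Int.fract (((p : ℚ) + (t : ℚ)) / 3))
    (hG : (edgeCount G : ℚ) < (p : ℚ) - 2 * (t : ℚ) + 3 * Int.fract (((p : ℚ) + (t : ℚ)) / 3)
            + max (t : ℚ) (3 * Int.fract (((p : ℚ) + (t : ℚ)) / 3))) :
    ⌊((p : ℚ) + (t : ℚ)) / 3⌋ + 1 ≤ (indepNum' G : ℤ) := by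
  have hx : ((p : ℚ) + (t : ℚ)) = (((p : ℤ) + (t : ℤ) : ℤ) : ℚ) := by push_cast; ring
  set N : ℤ := (p : ℤ) + (t : ℤ) with hNdef
  have hfloor : ⌊((p : ℚ) + (t : ℚ)) / 3⌋ = N / 3 := by
    rw [hx]
    exact_mod_cast Rat.floor_intCast_div_natCast N 3
  have hqr : 3 * (N / 3) + N % 3 = N := Int.mul_ediv_add_emod N 3
  have hfract : 3 * Int.fract (((p : ℚ) + (t : ℚ)) / 3) = ((N % 3 : ℤ) : ℚ) := by
    rw [← Int.self_sub_floor, hfloor, hx]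
    rw [show ((N : ℤ) : ℚ) = ((3 * (N / 3) + N % 3 : ℤ) : ℚ) by rw [hqr]]
    push_cast
    ring
  rw [hfract] at hG
  rw [hfloor]
  have k2' : 4 * (p : ℤ) ≤ 2 * (edgeCount G : ℤ) + 6 * (indepNum' G : ℤ) := by
    have h := key_s6 2 V G
    rw [Nat.card_eq_fintype_card, hV] at h
    push_cast at h ⊢
    linarith
  have k3' : 6 * (p : ℤ) ≤ 2 * (edgeCount G : ℤ) + 12 * (indepNum' G : ℤ) := by
    have h := key_s6 3 V G
    rw [Nat.card_eq_fintype_card, hV] at h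
    push_cast at h ⊢
    linarith
  rcases le_total ((N % 3 : ℤ) : ℚ) ((t : ℚ)) with h | h
  · rw [max_eq_left h] at hG
    have hGi : (edgeCount G : ℤ) < (p : ℤ) - 2 * t + N % 3 + t := by exact_mod_cast hG
    omega
  · rw [max_eq_right h] at hG
    have hGi : (edgeCount G : ℤ) < (p : ℤ) - 2 * t + N % 3 + N % 3 := by exact_mod_cast hG
    have hti : (t : ℤ) ≤ N % 3 := by exact_mod_cast h
    omega
end

section
/- Let G be a simple graph of order p ≥ 9. If e(G) < p + 6{p/3}, then α(G) ≥ ⌊p/3⌋ + 1. -/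
open SimpleGraph

private lemma caro_wei_step {V : Type*} [Fintype V] [DecidableEq V] (G : SimpleGraph V)
    [DecidableRel G.Adj] (A : Finset V) :
    ∃ s : Finset V, s ⊆ A ∧ IsIndepFinset G s ∧
      ∑ v ∈ A, (1 : ℚ) / (((G.neighborFinset v ∩ A).card : ℚ) + 1) ≤ s.card := by
  induction A using Finset.strongInduction with
  | _ A ih =>
    rcases A.eq_empty_or_nonempty with rfl | hA
    · exact ⟨∅, by simp, by intro u hu; simp at hu, by simp⟩
    obtain ⟨v, hvA, hmin⟩ := A.exists_min_image (fun w => (G.neighborFinset w ∩ A).card) hA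
    set N : Finset V := insert v (G.neighborFinset v ∩ A) with hN
    have hNA : N ⊆ A := by
      intro x hx
      rcases Finset.mem_insert.mp hx with rfl | hx
      · exact hvA
      · exact (Finset.mem_inter.mp hx).2
    have hBA : A \ N ⊂ A := Finset.sdiff_ssubset hNA ⟨v, Finset.mem_insert_self _ _⟩
    obtain ⟨s, hsB, hind, hsum⟩ := ih (A \ N) hBA
    have hvs : v ∉ s := fun h => by
      have := hsB h
      simp [hN] at this
    have hAdjv : ∀ u ∈ s, ¬ G.Adj v u := by
      intro u hu hadj
      have huB := hsB hu
      have huA : u ∈ A := (Finset.mem_sdiff.mp huB).1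
      have : u ∈ N := Finset.mem_insert_of_mem (Finset.mem_inter.mpr ⟨(G.mem_neighborFinset v u).mpr hadj, huA⟩)
      exact (Finset.mem_sdiff.mp huB).2 this
    refine ⟨insert v s, ?_, ?_, ?_⟩
    · exact Finset.insert_subset hvA (hsB.trans (Finset.sdiff_subset))
    · intro u hu w hw hne hadj
      rcases Finset.mem_insert.mp hu with hu' | hu' <;>
        rcases Finset.mem_insert.mp hw with hw' | hw'
      · exact hne (hu'.trans hw'.symm)
      · exact hAdjv w hw' (hu' ▸ hadj)
      · exact hAdjv u hu' (hw' ▸ hadj).symm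
      · exact hind u hu' w hw' hne hadj
    · have hcardN : N.card = (G.neighborFinset v ∩ A).card + 1 := by
        rw [hN, Finset.card_insert_of_notMem]
        simp [SimpleGraph.mem_neighborFinset]
      have hsplit : ∑ w ∈ A \ N, (1 : ℚ) / (((G.neighborFinset w ∩ A).card : ℚ) + 1)
          + ∑ w ∈ N, (1 : ℚ) / (((G.neighborFinset w ∩ A).card : ℚ) + 1)
          = ∑ w ∈ A, (1 : ℚ) / (((G.neighborFinset w ∩ A).card : ℚ) + 1) :=
        Finset.sum_sdiff hNA
      have hboundN : ∑ w ∈ N, (1 : ℚ) / (((G.neighborFinset w ∩ A).card : ℚ) + 1) ≤ 1 := by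
        have hterm : ∀ w ∈ N, (1 : ℚ) / (((G.neighborFinset w ∩ A).card : ℚ) + 1)
            ≤ 1 / (((G.neighborFinset v ∩ A).card : ℚ) + 1) := by
          intro w hw
          have hle := hmin w (hNA hw)
          apply one_div_le_one_div_of_le (by positivity)
          have : ((G.neighborFinset v ∩ A).card : ℚ) ≤ ((G.neighborFinset w ∩ A).card : ℚ) := by
            exact_mod_cast hle
          linarith
        calc ∑ w ∈ N, (1 : ℚ) / (((G.neighborFinset w ∩ A).card : ℚ) + 1)
            ≤ N.card • (1 / (((G.neighborFinset v ∩ A).card : ℚ) + 1)) :=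
              Finset.sum_le_card_nsmul _ _ _ hterm
          _ = 1 := by
              rw [hcardN, nsmul_eq_mul]
              push_cast
              rw [mul_one_div]
              apply div_self
              positivity
      have hboundB : ∑ w ∈ A \ N, (1 : ℚ) / (((G.neighborFinset w ∩ A).card : ℚ) + 1)
          ≤ (s.card : ℚ) := by
        refine le_trans (Finset.sum_le_sum ?_) hsum
        intro w _
        apply one_div_le_one_div_of_le (by positivity)
        have hc : (G.neighborFinset w ∩ (A \ N)).card ≤ (G.neighborFinset w ∩ A).card :=
          Finset.card_le_card (Finset.inter_subset_inter le_rfl Finset.sdiff_subset)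
        have : ((G.neighborFinset w ∩ (A \ N)).card : ℚ) ≤ ((G.neighborFinset w ∩ A).card : ℚ) := by
          exact_mod_cast hc
        linarith
      rw [Finset.card_insert_of_notMem hvs]
      push_cast
      linarith [hsplit, hboundN, hboundB]

private lemma tangent_line (x a : ℚ) (hx : 0 ≤ x) (ha : 0 ≤ a) :
    1/(a+1) - (x-a)/(a+1)^2 ≤ 1/(x+1) := by
  have h1 : (0:ℚ) < x+1 := by linarith
  have h2 : (0:ℚ) < a+1 := by linarith
  have key : 1/(x+1) - (1/(a+1) - (x-a)/(a+1)^2) = (x-a)^2/((x+1)*(a+1)^2) := by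
    field_simp; ring
  have hpos : (0:ℚ) ≤ (x-a)^2/((x+1)*(a+1)^2) := by positivity
  linarith

private lemma indep_bound {V : Type*} [Fintype V] (G : SimpleGraph V)
    (hV : 0 < Fintype.card V) :
    ∃ s : Finset V, IsIndepFinset G s ∧
      (Fintype.card V : ℚ)^2 ≤ (s.card : ℚ) * ((Fintype.card V : ℚ) + 2 * edgeCount G) := by
  classical
  obtain ⟨s, -, hind, hsum⟩ := caro_wei_step G Finset.univ
  simp only [Finset.inter_univ] at hsum
  set n : ℚ := (Fintype.card V : ℚ) with hn
  have hn0 : (0:ℚ) < n := by rw [hn]; exact_mod_cast hV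
  set D : ℚ := 2 * (edgeCount G : ℚ) with hDdef
  have hD : ∑ v : V, ((G.neighborFinset v).card : ℚ) = D := by
    have h1 : ∑ v : V, (G.neighborFinset v).card = 2 * G.edgeFinset.card :=
      G.sum_degrees_eq_twice_card_edges
    have h2 : edgeCount G = G.edgeFinset.card := by
      rw [edgeCount, Nat.card_eq_fintype_card, SimpleGraph.edgeFinset_card]
    rw [hDdef, h2]
    exact_mod_cast h1
  set a : ℚ := D / n with hadef
  have hD0 : (0:ℚ) ≤ D := by positivity
  have ha : (0:ℚ) ≤ a := by positivity
  have hna : n * a = D := by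
    rw [hadef, mul_div_cancel₀ _ hn0.ne']
  have hzero : ∑ v : V, (((G.neighborFinset v).card : ℚ) - a) = 0 := by
    rw [Finset.sum_sub_distrib, Finset.sum_const, Finset.card_univ, nsmul_eq_mul, hD, ← hn, hna]
    ring
  have hsum2 : ∑ v : V, (1/(a+1) - (((G.neighborFinset v).card : ℚ) - a)/(a+1)^2)
      ≤ ∑ v : V, (1:ℚ)/(((G.neighborFinset v).card : ℚ) + 1) :=
    Finset.sum_le_sum (fun v _ => tangent_line _ a (by positivity) ha)
  have heq : ∑ v : V, (1/(a+1) - (((G.neighborFinset v).card : ℚ) - a)/(a+1)^2)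
      = n/(a+1) := by
    have hz2 : ∑ x : V, (((G.neighborFinset x).card : ℚ) - a)/(a+1)^2 = 0 := by
      rw [← Finset.sum_div, hzero, zero_div]
    rw [Finset.sum_sub_distrib, hz2, sub_zero, Finset.sum_const, Finset.card_univ,
      nsmul_eq_mul, ← hn, mul_one_div]
  have hlow : n / (a+1) ≤ (s.card : ℚ) := by
    rw [← heq]; exact hsum2.trans hsum
  have ha1 : (0:ℚ) < a + 1 := by linarith
  have h2 : n ≤ (s.card : ℚ) * (a+1) := (div_le_iff₀ ha1).mp hlow
  have h3 : (s.card : ℚ) * (a+1) * n = (s.card : ℚ) * (n + D) := by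
    rw [← hna]; ring
  refine ⟨s, hind, ?_⟩
  have h4 : n * n ≤ ((s.card : ℚ) * (a+1)) * n := mul_le_mul_of_nonneg_right h2 hn0.le
  rw [h3] at h4
  calc n^2 = n * n := sq n
    _ ≤ (s.card : ℚ) * (n + D) := h4

theorem stmt_7 (p : ℕ) (hp : 9 ≤ p) {V : Type*} [Fintype V] (hV : Fintype.card V = p)
    (G : SimpleGraph V)
    (hG : (edgeCount G : ℚ) < (p : ℚ) + 6 * Int.fract ((p : ℚ) / 3)) :
    ⌊(p : ℚ) / 3⌋ + 1 ≤ (indepNum' G : ℤ) := by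
  classical
  obtain ⟨q, r, hr3, hpqr⟩ : ∃ q r : ℕ, r < 3 ∧ p = 3*q + r :=
    ⟨p/3, p%3, Nat.mod_lt p (by norm_num), (Nat.div_add_mod p 3).symm⟩
  have hrQ : (r:ℚ) < 3 := by exact_mod_cast hr3
  have hr0 : (0:ℚ) ≤ r := by positivity
  have hform : (p:ℚ)/3 = ((q:ℤ) : ℚ) + (r:ℚ)/3 := by
    subst hpqr; push_cast; ring
  have hfract : Int.fract ((p:ℚ)/3) = (r:ℚ)/3 := by
    rw [hform, Int.fract_intCast_add, Int.fract_eq_self.mpr ⟨by positivity, by linarith⟩]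
  have hfloor : ⌊(p:ℚ)/3⌋ = (q:ℤ) := by
    rw [hform, Int.floor_intCast_add,
      Int.floor_eq_zero_iff.mpr ⟨by positivity, by linarith⟩, add_zero]
  have he : (edgeCount G : ℚ) < (p:ℚ) + 2*r := by
    rw [hfract] at hG; linarith
  have heN : edgeCount G + 1 ≤ p + 2*r := by exact_mod_cast he
  have hV0 : 0 < Fintype.card V := by omega
  obtain ⟨s, hind, hkey⟩ := indep_bound G hV0
  rw [hV] at hkey
  have hbdd : BddAbove {n | ∃ t : Finset V, IsIndepFinset G t ∧ t.card = n} := by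
    refine ⟨Fintype.card V, fun m hm => ?_⟩
    obtain ⟨t, -, ht⟩ := hm
    exact ht ▸ t.card_le_univ
  have hsle : s.card ≤ indepNum' G := le_csSup hbdd ⟨s, hind, rfl⟩
  rw [hfloor]
  have hmain : q + 1 ≤ indepNum' G := by
    by_contra hcon
    push_neg at hcon
    have hαq : indepNum' G ≤ q := by omega
    have hsq : (s.card : ℚ) ≤ (q : ℚ) := by exact_mod_cast hsle.trans hαq
    have hq3 : 3 ≤ q := by omega
    have hq3Q : (3:ℚ) ≤ q := by exact_mod_cast hq3
    have hq0 : (0:ℚ) ≤ q := by linarith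
    have hr2 : (r:ℚ) ≤ 2 := by exact_mod_cast (by omega : r ≤ 2)
    have hpQ : (p:ℚ) = 3*q + r := by exact_mod_cast hpqr
    have heQ : (edgeCount G : ℚ) ≤ (p:ℚ) + 2*r - 1 := by
      have : ((edgeCount G : ℚ)) + 1 ≤ (p:ℚ) + 2*r := by exact_mod_cast heN
      linarith
    have hpe : (0:ℚ) ≤ (p:ℚ) + 2 * edgeCount G := by positivity
    have hk2 : (p:ℚ)^2 ≤ (q:ℚ) * ((p:ℚ) + 2*(edgeCount G : ℚ)) :=
      hkey.trans (mul_le_mul_of_nonneg_right hsq hpe)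
    have hp2 : (p:ℚ)^2 = (3*(q:ℚ)+r)^2 := by rw [hpQ]
    have hqp : (q:ℚ)*(p:ℚ) = (q:ℚ)*(3*(q:ℚ)+r) := by rw [hpQ]
    have hqe : (q:ℚ)*(edgeCount G : ℚ) ≤ (q:ℚ)*((p:ℚ) + 2*r - 1) :=
      mul_le_mul_of_nonneg_left heQ hq0
    nlinarith [hk2, hp2, hqp, hqe, hpQ,
      mul_nonneg (by linarith : (0:ℚ) ≤ (q:ℚ) - 3) (by linarith : (0:ℚ) ≤ 2 - (r:ℚ)),
      sq_nonneg (2*(r:ℚ) - 3)]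
  exact_mod_cast hmain
end

section
/- Let G be a simple graph of order p ≥ 5. If e(G) < p when 3 ∣ p, e(G) < p + 2 when 3 ∣ p − 1, and e(G) < p − 1 when 3 ∣ p − 2, then α(G) ≥ ⌊(p+1)/3⌋ + 1. -/
open SimpleGraph

universe u

theorem caroWei' : ∀ (n : ℕ) (V : Type u) [Fintype V], Fintype.card V = n →
    ∀ G : SimpleGraph V, ∃ s : Finset V, IsIndepFinset G s ∧
      ∑ v : V, (1 : ℚ) / (Nat.card (G.neighborSet v) + 1) ≤ s.card := by
  intro n
  induction n using Nat.strong_induction_on with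
  | _ n IH =>
    intro V _ hcard G
    classical
    rcases Nat.eq_zero_or_pos n with hn | hn
    · refine ⟨∅, by intro u hu; simp at hu, ?_⟩
      have : IsEmpty V := Fintype.card_eq_zero_iff.mp (hcard.trans hn)
      simp
    · have hne : (Finset.univ : Finset V).Nonempty := by
        rw [← Finset.card_pos, Finset.card_univ, hcard]; exact hn
      obtain ⟨v, -, hv⟩ := Finset.exists_min_image Finset.univ
        (fun u => Nat.card (G.neighborSet u)) hne
      set d : V → ℕ := fun u => Nat.card (G.neighborSet u) with hd
      have hvmin : ∀ u : V, d v ≤ d u := fun u => hv u (Finset.mem_univ u)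
      set S : Finset V := insert v (G.neighborFinset v) with hS
      have hvS : v ∈ S := Finset.mem_insert_self _ _
      have hScard : S.card = d v + 1 := by
        rw [hS, Finset.card_insert_of_notMem (by simp), card_neighborFinset_eq_degree]
        rw [hd]
        simp [← card_neighborSet_eq_degree, Nat.card_eq_fintype_card]
      -- the induced graph on the complement of S
      set W := {u : V // u ∉ S} with hW
      set G' : SimpleGraph W := G.comap Subtype.val with hG'
      have hWcard : Fintype.card W = n - (d v + 1) := by
        have h : Fintype.card W = Fintype.card V - Fintype.card {u : V // u ∈ S} :=
          Fintype.card_subtype_compl _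
        rw [h, hcard, ← hScard]
        congr 1
        simp [Fintype.card_subtype]
      have hWlt : Fintype.card W < n := by
        rw [hWcard]; omega
      obtain ⟨s', hs'indep, hs'sum⟩ := IH _ hWlt W rfl G'
      -- degree comparison
      have hdeg : ∀ u : W, Nat.card (G'.neighborSet u) ≤ d u.1 := by
        intro u
        apply Nat.card_le_card_of_injective
          (fun w => (⟨w.1.1, w.2⟩ : G.neighborSet u.1))
        intro a b hab
        simp only [Subtype.mk.injEq] at hab
        exact Subtype.ext (Subtype.ext (by have h := congrArg Subtype.val hab; exact h))
      -- the independent set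
      refine ⟨insert v (s'.image Subtype.val), ?_, ?_⟩
      · have hvnot : v ∉ s'.image Subtype.val := by
          intro h
          obtain ⟨u, -, hu⟩ := Finset.mem_image.mp h
          exact u.2 (hu ▸ hvS)
        intro a ha b hb hab
        have hnotadj : ∀ w : V, w ∉ S → ¬ G.Adj v w := by
          intro w hw hadj
          exact hw (Finset.mem_insert_of_mem (by simpa using hadj))
        rcases Finset.mem_insert.mp ha with rfl | ha <;>
          rcases Finset.mem_insert.mp hb with rfl | hb
        · exact absurd rfl hab
        · obtain ⟨ub, hub, rfl⟩ := Finset.mem_image.mp hb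
          exact hnotadj _ ub.2
        · obtain ⟨ua, hua, rfl⟩ := Finset.mem_image.mp ha
          intro hadj
          exact hnotadj _ ua.2 hadj.symm
        · obtain ⟨ua, hua, rfl⟩ := Finset.mem_image.mp ha
          obtain ⟨ub, hub, rfl⟩ := Finset.mem_image.mp hb
          have : ua ≠ ub := fun h => hab (by rw [h])
          exact hs'indep ua hua ub hub this
      · have hcard2 : (insert v (s'.image Subtype.val)).card = s'.card + 1 := by
          rw [Finset.card_insert_of_notMem, Finset.card_image_of_injective _ Subtype.val_injective]
          intro h
          obtain ⟨u, -, hu⟩ := Finset.mem_image.mp h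
          exact u.2 (hu ▸ hvS)
        rw [hcard2]
        -- split the sum
        have hsplit : ∑ u : V, (1 : ℚ) / (d u + 1)
            = ∑ u ∈ S, (1 : ℚ) / (d u + 1) + ∑ u ∈ Sᶜ, (1 : ℚ) / (d u + 1) := by
          rw [Finset.sum_add_sum_compl]
        have h1 : ∑ u ∈ S, (1 : ℚ) / (d u + 1) ≤ 1 := by
          have : ∀ u ∈ S, (1 : ℚ) / (d u + 1) ≤ 1 / (d v + 1) := by
            intro u _
            apply one_div_le_one_div_of_le
            · positivity
            · have := hvmin u
              push_cast
              exact_mod_cast by exact_mod_cast Nat.add_le_add_right this 1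
          calc ∑ u ∈ S, (1 : ℚ) / (d u + 1) ≤ ∑ u ∈ S, (1 : ℚ) / (d v + 1) :=
                Finset.sum_le_sum this
            _ = S.card * (1 / (d v + 1)) := by rw [Finset.sum_const, nsmul_eq_mul]
            _ = 1 := by
                rw [hScard]
                push_cast
                field_simp
        have h2 : ∑ u ∈ Sᶜ, (1 : ℚ) / (d u + 1) ≤ s'.card := by
          have heq : ∑ u ∈ Sᶜ, (1 : ℚ) / (d u + 1) = ∑ u : W, (1 : ℚ) / (d u.1 + 1) := by
            exact Finset.sum_subtype Sᶜ (fun x => by simp) (fun u => (1 : ℚ) / (d u + 1))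
          rw [heq]
          refine le_trans (Finset.sum_le_sum ?_) hs'sum
          intro u _
          apply one_div_le_one_div_of_le
          · positivity
          · have := hdeg u
            exact_mod_cast Nat.add_le_add_right this 1
        rw [hsplit]
        push_cast
        linarith

theorem stmt_8 (p : ℕ) (hp : 5 ≤ p) {V : Type*} [Fintype V] (hV : Fintype.card V = p)
    (G : SimpleGraph V)
    (h0 : 3 ∣ p → edgeCount G < p)
    (h1 : 3 ∣ p - 1 → edgeCount G < p + 2)
    (h2 : 3 ∣ p - 2 → edgeCount G < p - 1) :
    (p + 1) / 3 + 1 ≤ indepNum' G := by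
  classical
  obtain ⟨s, hs, hsum⟩ := caroWei' p V hV G
  set e := edgeCount G with he
  set t := s.card with ht
  -- handshake
  have hHS : ∑ v : V, Nat.card (G.neighborSet v) = 2 * e := by
    have h := G.sum_degrees_eq_twice_card_edges
    have h2 : ∑ v : V, Nat.card (G.neighborSet v) = ∑ v : V, G.degree v := by
      apply Finset.sum_congr rfl
      intro v _
      rw [Nat.card_eq_fintype_card, card_neighborSet_eq_degree]
    rw [h2, h, he, edgeCount, Nat.card_eq_fintype_card, ← edgeFinset_card]
  -- Cauchy-Schwarz
  have hCS : ((Fintype.card V : ℚ)) ^ 2 ≤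
      (∑ v : V, ((Nat.card (G.neighborSet v) : ℚ) + 1)) *
        ∑ v : V, (1 : ℚ) / (Nat.card (G.neighborSet v) + 1) := by
    have h := Finset.sum_sq_le_sum_mul_sum_of_sq_eq_mul Finset.univ
      (r := fun _ : V => (1 : ℚ))
      (f := fun v : V => (Nat.card (G.neighborSet v) : ℚ) + 1)
      (g := fun v : V => (1 : ℚ) / ((Nat.card (G.neighborSet v) : ℚ) + 1))
      (fun i _ => by positivity) (fun i _ => by positivity)
      (fun i _ => by rw [one_pow]; field_simp)
    simpa using h
  have hsumf : ∑ v : V, ((Nat.card (G.neighborSet v) : ℚ) + 1) = (p : ℚ) + 2 * e := by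
    push_cast [Finset.sum_add_distrib, ← Nat.cast_sum]
    rw [hHS]
    push_cast
    rw [Finset.sum_const, Finset.card_univ, hV, nsmul_eq_mul]
    ring
  have keyQ : ((p : ℚ)) ^ 2 ≤ ((p : ℚ) + 2 * e) * t := by
    calc ((p : ℚ)) ^ 2 = ((Fintype.card V : ℚ)) ^ 2 := by rw [hV]
      _ ≤ (∑ v : V, ((Nat.card (G.neighborSet v) : ℚ) + 1)) *
          ∑ v : V, (1 : ℚ) / (Nat.card (G.neighborSet v) + 1) := hCS
      _ ≤ ((p : ℚ) + 2 * e) * t := by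
          rw [hsumf]
          apply mul_le_mul_of_nonneg_left hsum
          positivity
  -- t ≤ indepNum'
  have hle : t ≤ indepNum' G := by
    apply le_csSup
    · refine ⟨Fintype.card V, ?_⟩
      rintro m ⟨u, -, rfl⟩
      exact le_trans (Finset.card_le_univ u) (le_of_eq (Finset.card_univ))
    · exact ⟨s, hs, rfl⟩
  refine le_trans ?_ hle
  -- arithmetic by cases on p % 3
  set m := p / 3 with hm
  have hmod : p % 3 = 0 ∨ p % 3 = 1 ∨ p % 3 = 2 := by omega
  rcases hmod with hr | hr | hr
  · have hpm : p = 3 * m := by omega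
    have hE : e < p := h0 (by omega)
    have hgoal : (p + 1) / 3 + 1 = m + 1 := by omega
    rw [hgoal]
    by_contra hcon
    have hT : t ≤ m := by omega
    have hmQ : (2 : ℚ) ≤ m := by exact_mod_cast (by omega : 2 ≤ m)
    have hEQ : (e : ℚ) + 1 ≤ 3 * m := by exact_mod_cast (by omega : e + 1 ≤ 3 * m)
    have hTQ : (t : ℚ) ≤ m := by exact_mod_cast hT
    have hpQ : (p : ℚ) = 3 * m := by exact_mod_cast hpm
    rw [hpQ] at keyQ
    nlinarith [keyQ, hmQ, hEQ, hTQ, mul_le_mul_of_nonneg_left hTQ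
      (show (0:ℚ) ≤ 3 * m + 2 * e by positivity)]
  · have hpm : p = 3 * m + 1 := by omega
    have hE : e < p + 2 := h1 (by omega)
    have hgoal : (p + 1) / 3 + 1 = m + 1 := by omega
    rw [hgoal]
    by_contra hcon
    have hT : t ≤ m := by omega
    have hEQ : (e : ℚ) ≤ 3 * m + 2 := by exact_mod_cast (by omega : e ≤ 3 * m + 2)
    have hTQ : (t : ℚ) ≤ m := by exact_mod_cast hT
    have hpQ : (p : ℚ) = 3 * m + 1 := by exact_mod_cast hpm
    have hmQ : (0 : ℚ) ≤ m := by positivity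
    rw [hpQ] at keyQ
    nlinarith [keyQ, hEQ, hTQ, hmQ, mul_le_mul_of_nonneg_left hTQ
      (show (0:ℚ) ≤ 3 * m + 1 + 2 * e by positivity)]
  · have hpm : p = 3 * m + 2 := by omega
    have hE : e < p - 1 := h2 (by omega)
    have hgoal : (p + 1) / 3 + 1 = m + 2 := by omega
    rw [hgoal]
    by_contra hcon
    have hT : t ≤ m + 1 := by omega
    have hEQ : (e : ℚ) ≤ 3 * m := by exact_mod_cast (by omega : e ≤ 3 * m)
    have hTQ : (t : ℚ) ≤ m + 1 := by exact_mod_cast hT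
    have hpQ : (p : ℚ) = 3 * m + 2 := by exact_mod_cast hpm
    have hmQ : (0 : ℚ) ≤ m := by positivity
    rw [hpQ] at keyQ
    nlinarith [keyQ, hEQ, hTQ, hmQ, mul_le_mul_of_nonneg_left hTQ
      (show (0:ℚ) ≤ 3 * m + 2 + 2 * e by positivity)]
end

section
/- Let p, n, t be positive integers with t ≤ n/2 + 2 and p > n + 7 − 2t. If G is a simple graph of order p and e(G) < (p+n)/2 + 1 − t, then α(G) ≥ ⌊(p − ⌊(n+4−2t)/3⌋)/2⌋ + 1. -/
open SimpleGraph

private lemma indep_card_le_indepNum' {V : Type*} [Fintype V] (G : SimpleGraph V) (I : Finset V)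
    (hI : IsIndepFinset G I) : I.card ≤ indepNum' G := by
  apply le_csSup
  · exact ⟨Fintype.card V, fun m hm => by obtain ⟨s, _, rfl⟩ := hm; exact Finset.card_le_univ s⟩
  · exact ⟨I, hI, rfl⟩

private lemma key_greedy_lemma {V : Type*} [DecidableEq V] (G : SimpleGraph V)
    [DecidableRel G.Adj] (s : Finset V) : ∃ I : Finset V, I ⊆ s ∧ IsIndepFinset G I ∧
      4 * s.card ≤ (∑ u ∈ s, ∑ w ∈ s, if G.Adj u w then 1 else 0) + 6 * I.card := by
  induction s using Finset.strongInductionOn with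
  | _ s ih =>
  rcases s.eq_empty_or_nonempty with rfl | hne
  · exact ⟨∅, by simp, fun u hu => by simp at hu, by simp⟩
  obtain ⟨v, hv, hmin⟩ := s.exists_min_image (fun u => ∑ w ∈ s, if G.Adj u w then 1 else 0) hne
  set d : ℕ := ∑ w ∈ s, if G.Adj v w then 1 else 0 with hd
  set R : Finset V := insert v (s.filter (G.Adj v)) with hRdef
  have hRs : R ⊆ s := Finset.insert_subset hv (Finset.filter_subset _ _)
  have hvR : v ∈ R := Finset.mem_insert_self _ _
  have hcardR : R.card = d + 1 := by
    rw [hRdef, Finset.card_insert_of_notMem (by simp [G.irrefl]), Finset.card_filter]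
  set s' : Finset V := s \ R with hs'def
  have hsub : s' ⊂ s := Finset.sdiff_ssubset hRs ⟨v, hvR⟩
  obtain ⟨I', hIs, hIind, hIcard⟩ := ih s' hsub
  have hvI' : v ∉ I' := fun h => (Finset.mem_sdiff.mp (hIs h)).2 hvR
  have hnadj : ∀ w ∈ I', ¬ G.Adj v w := by
    intro w hw hadj
    have hw' := hIs hw
    rw [hs'def, Finset.mem_sdiff] at hw'
    exact hw'.2 (Finset.mem_insert_of_mem (Finset.mem_filter.mpr ⟨hw'.1, hadj⟩))
  refine ⟨insert v I', Finset.insert_subset hv (hIs.trans Finset.sdiff_subset), ?_, ?_⟩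
  · intro u hu w hw hne
    rcases Finset.mem_insert.mp hu with rfl | hu' <;> rcases Finset.mem_insert.mp hw with rfl | hw'
    · exact absurd rfl hne
    · exact hnadj w hw'
    · exact fun h => hnadj u hu' (G.adj_symm h)
    · exact hIind u hu' w hw' hne
  · have hsplit : (∑ u ∈ s', ∑ w ∈ s, if G.Adj u w then 1 else 0)
        + (∑ u ∈ R, ∑ w ∈ s, if G.Adj u w then 1 else 0)
        = ∑ u ∈ s, ∑ w ∈ s, if G.Adj u w then 1 else 0 := Finset.sum_sdiff hRs
    have hA' : (∑ u ∈ s', ∑ w ∈ s', if G.Adj u w then 1 else 0)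
        ≤ ∑ u ∈ s', ∑ w ∈ s, if G.Adj u w then 1 else 0 :=
      Finset.sum_le_sum fun u _ =>
        Finset.sum_le_sum_of_subset Finset.sdiff_subset
    have hRlow : (d + 1) * d ≤ ∑ u ∈ R, ∑ w ∈ s, if G.Adj u w then 1 else 0 := by
      calc (d + 1) * d = ∑ _u ∈ R, d := by rw [Finset.sum_const, hcardR, smul_eq_mul]
      _ ≤ _ := Finset.sum_le_sum fun u hu => hmin u (hRs hu)
    have hcards : s.card = s'.card + (d + 1) := by
      have h1 : s'.card + R.card = s.card := Finset.card_sdiff_add_card_eq_card hRs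
      rw [hcardR] at h1
      omega
    rw [Finset.card_insert_of_notMem hvI']
    have hdd : 3 * d ≤ d * d + 2 := by
      rcases Nat.lt_or_ge d 3 with h | h
      · interval_cases d <;> norm_num
      · nlinarith
    have hexp : (d + 1) * d = d * d + d := by ring
    linarith

private lemma double_count {V : Type*} [Fintype V] [DecidableEq V] (G : SimpleGraph V)
    [DecidableRel G.Adj] :
    (∑ u : V, ∑ w : V, if G.Adj u w then 1 else 0) = 2 * edgeCount G := by
  have h2 : edgeCount G = G.edgeFinset.card := by
    rw [edgeCount, Nat.card_coe_set_eq, Set.ncard_eq_toFinset_card']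
    unfold SimpleGraph.edgeFinset
    convert rfl
  rw [h2, ← SimpleGraph.sum_degrees_eq_twice_card_edges]
  refine Finset.sum_congr rfl fun u _ => ?_
  rw [← SimpleGraph.card_neighborFinset_eq_degree, SimpleGraph.neighborFinset_eq_filter,
    Finset.card_filter]


theorem stmt_10 (p n t : ℕ) (hp0 : 0 < p) (hn0 : 0 < n) (ht0 : 0 < t)
    (ht : (t : ℚ) ≤ (n : ℚ) / 2 + 2) (hpn : (n : ℚ) + 7 - 2 * (t : ℚ) < (p : ℚ))
    {V : Type*} [Fintype V] (hV : Fintype.card V = p) (G : SimpleGraph V)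
    (hG : (edgeCount G : ℚ) < ((p : ℚ) + (n : ℚ)) / 2 + 1 - (t : ℚ)) :
    (p - (n + 4 - 2 * t) / 3) / 2 + 1 ≤ indepNum' G := by
  classical
  have h2t : 2 * t ≤ n + 4 := by
    have : ((2 * t : ℕ) : ℚ) ≤ ((n + 4 : ℕ) : ℚ) := by push_cast; linarith
    exact_mod_cast this
  have hp2t : n + 7 < p + 2 * t := by
    have : ((n + 7 : ℕ) : ℚ) < ((p + 2 * t : ℕ) : ℚ) := by push_cast; linarith
    exact_mod_cast this
  have hE : 2 * edgeCount G + 2 * t < p + n + 2 := by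
    have : ((2 * edgeCount G + 2 * t : ℕ) : ℚ) < ((p + n + 2 : ℕ) : ℚ) := by
      push_cast; linarith
    exact_mod_cast this
  obtain ⟨I, -, hind, hkey⟩ := key_greedy_lemma G (Finset.univ : Finset V)
  rw [double_count G, Finset.card_univ, hV] at hkey
  have hIle : I.card ≤ indepNum' G := indep_card_le_indepNum' G I hind
  omega
end

section
/- Let p, m, n be positive integers with p ≥ n ≥ 4 and m ≤ n/2 − 1. If G is an (n,m) graph of order p, then α(G) ≥ p − m. -/
open SimpleGraph

theorem stmt_11 (p m n : ℕ) (hm0 : 0 < m) (hn : 4 ≤ n) (hnp : n ≤ p)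
    (hm : (m : ℚ) ≤ (n : ℚ) / 2 - 1)
    {V : Type*} [Fintype V] (hV : Fintype.card V = p) (G : SimpleGraph V)
    (hG : IsNMGraph n m G) :
    p - m ≤ indepNum' G := by
  classical
  have hn2 : 2 * m + 2 ≤ n := by
    have h : (2 * m + 2 : ℚ) ≤ (n : ℚ) := by linarith
    exact_mod_cast h
  have hEfin : G.edgeSet.Finite := Set.toFinite _
  set E : Finset (Sym2 V) := hEfin.toFinset with hEdef
  have hEcount : edgeCount G = E.card := by
    rw [edgeCount, Nat.card_coe_set_eq, Set.ncard_eq_toFinset_card _ hEfin]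
  -- Step 1: the total number of edges is at most m
  have hEm : E.card ≤ m := by
    by_contra h
    push_neg at h
    obtain ⟨E', hE'sub, hE'card⟩ := Finset.exists_subset_card_eq (show m + 1 ≤ E.card by omega)
    set A : Finset V := E'.biUnion (fun e => {e.out.1, e.out.2}) with hAdef
    have hAcard : A.card ≤ n := by
      calc A.card ≤ ∑ e ∈ E', ({e.out.1, e.out.2} : Finset V).card :=
            Finset.card_biUnion_le
        _ ≤ ∑ _e ∈ E', 2 := by
            refine Finset.sum_le_sum fun e _ => ?_
            exact (Finset.card_insert_le _ _).trans (by simp)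
        _ = 2 * (m + 1) := by rw [Finset.sum_const, hE'card]; ring
        _ ≤ n := by omega
    obtain ⟨s, hAs, -, hscard⟩ := Finset.exists_subsuperset_card_eq
      (Finset.subset_univ A) hAcard (by rw [Finset.card_univ, hV]; exact hnp)
    -- every edge of E' lifts to an edge of the induced graph on s
    have hsub : (↑E' : Set (Sym2 V)) ⊆
        Sym2.map (Subtype.val) '' ((G.induce (↑s : Set V)).edgeSet) := by
      intro e he
      have heE : e ∈ G.edgeSet := by
        have := hE'sub he
        rwa [hEdef, Set.Finite.mem_toFinset] at this
      have hout : e = s(e.out.1, e.out.2) := (Quot.out_eq e).symm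
      have hadj : G.Adj e.out.1 e.out.2 := by
        rw [hout] at heE; exact heE
      have hu : e.out.1 ∈ s := hAs (by
        simp only [hAdef, Finset.mem_biUnion]
        exact ⟨e, he, by simp⟩)
      have hv : e.out.2 ∈ s := hAs (by
        simp only [hAdef, Finset.mem_biUnion]
        exact ⟨e, he, by simp⟩)
      refine ⟨s(⟨e.out.1, hu⟩, ⟨e.out.2, hv⟩), ?_, ?_⟩
      · exact hadj
      · rw [Sym2.map_pair_eq]; exact hout.symm
    have hinj : Function.Injective (Sym2.map (Subtype.val : (↑s : Set V) → V)) :=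
      Sym2.map.injective Subtype.val_injective
    have hle : m + 1 ≤ edgeCount (G.induce (↑s : Set V)) := by
      have h1 : (↑E' : Set (Sym2 V)).ncard ≤
          (Sym2.map (Subtype.val) '' ((G.induce (↑s : Set V)).edgeSet)).ncard :=
        Set.ncard_le_ncard hsub ((Set.toFinite _).image _)
      rw [Set.ncard_coe_finset, hE'card,
        Set.ncard_image_of_injective _ hinj] at h1
      rwa [edgeCount, Nat.card_coe_set_eq]
    have := hG s hscard
    omega
  -- Step 2: removing one endpoint of each edge gives an independent set
  set S : Finset V := E.image (fun e => e.out.1) with hSdef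
  set T : Finset V := Finset.univ \ S with hTdef
  have hTindep : IsIndepFinset G T := by
    intro u hu v hv huv hadj
    have he : s(u, v) ∈ G.edgeSet := hadj
    have heE : s(u, v) ∈ E := by rw [hEdef, Set.Finite.mem_toFinset]; exact he
    have hmem : (s(u, v)).out.1 ∈ s(u, v) := Sym2.out_fst_mem _
    have hS : (s(u, v)).out.1 ∈ S := by
      rw [hSdef]; exact Finset.mem_image_of_mem _ heE
    rw [Sym2.mem_iff] at hmem
    rcases hmem with h | h
    · rw [hTdef, Finset.mem_sdiff] at hu; exact hu.2 (h ▸ hS)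
    · rw [hTdef, Finset.mem_sdiff] at hv; exact hv.2 (h ▸ hS)
  have hTcard : p - m ≤ T.card := by
    have hScard : S.card ≤ m := (Finset.card_image_le).trans hEm
    have : T.card = p - S.card := by
      rw [hTdef, Finset.card_sdiff_of_subset (Finset.subset_univ S), Finset.card_univ, hV]
    omega
  -- conclude via sSup
  have hbdd : BddAbove {k | ∃ t : Finset V, IsIndepFinset G t ∧ t.card = k} := by
    refine ⟨p, fun k hk => ?_⟩
    obtain ⟨t, -, rfl⟩ := hk
    exact hV ▸ Finset.card_le_univ t
  have hmem : T.card ∈ {k | ∃ t : Finset V, IsIndepFinset G t ∧ t.card = k} :=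
    ⟨T, hTindep, rfl⟩
  exact hTcard.trans (le_csSup hbdd hmem)
end

section
/- Let n and m be positive integers with m ≤ n − 2. If G is an (n,m) graph of order n + 1, then e(G) ≤ m + 1. -/
open SimpleGraph

open Finset in
lemma myEdgeCount_eq {V : Type*} [Fintype V] (G : SimpleGraph V) [DecidableRel G.Adj] :
    edgeCount G = G.edgeFinset.card := by
  rw [edgeCount, Nat.card_eq_fintype_card, ← Set.toFinset_card]
  congr 1

open Finset in
lemma myKey {V : Type*} [Fintype V] [DecidableEq V] (G : SimpleGraph V) [DecidableRel G.Adj]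
    (v : V) :
    edgeCount G = edgeCount (G.induce ((Finset.univ.erase v : Finset V) : Set V)) + G.degree v := by
  classical
  set s : Finset V := Finset.univ.erase v with hs
  have hsplit := Finset.card_filter_add_card_filter_not
      (s := G.edgeFinset) (p := fun e => v ∈ e)
  have hfil : ((G.induce (↑s : Set V)).edgeFinset).card
      = (G.edgeFinset.filter (fun e => v ∉ e)).card := by
    apply Finset.card_nbij (i := Sym2.map Subtype.val)
    · intro e he
      induction e using Sym2.ind with
      | _ a b =>
        simp only [Finset.mem_coe, mem_edgeFinset, mem_edgeSet] at he
        have ha : (a : V) ≠ v := by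
          have := a.2; simp [hs] at this; exact this
        have hb : (b : V) ≠ v := by
          have := b.2; simp [hs] at this; exact this
        simp only [Sym2.map_pair_eq, Finset.mem_coe, mem_filter, mem_edgeFinset, mem_edgeSet,
          Sym2.mem_iff]
        exact ⟨he, by tauto⟩
    · exact (Sym2.map.injective Subtype.val_injective).injOn
    · intro e he
      simp only [Finset.mem_coe, mem_filter, mem_edgeFinset, mem_edgeSet] at he
      obtain ⟨hadj, hv⟩ := he
      induction e using Sym2.ind with
      | _ a b =>
        simp only [Sym2.mem_iff, not_or] at hv
        have ha : a ∈ (↑s : Set V) := by simp [hs, Ne.symm hv.1]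
        have hb : b ∈ (↑s : Set V) := by simp [hs, Ne.symm hv.2]
        refine ⟨s(⟨a, ha⟩, ⟨b, hb⟩), ?_, by simp⟩
        simpa [mem_edgeFinset, mem_edgeSet] using hadj
  rw [myEdgeCount_eq G, myEdgeCount_eq, ← hsplit, ← G.incidenceFinset_eq_filter v,
    card_incidenceFinset_eq_degree, hfil]
  omega

theorem stmt_12 (n m : ℕ) (hn0 : 0 < n) (hm0 : 0 < m) (hm : m ≤ n - 2)
    {V : Type*} [Fintype V] (hV : Fintype.card V = n + 1) (G : SimpleGraph V)
    (hG : IsNMGraph n m G) :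
    edgeCount G ≤ m + 1 := by
  classical
  by_contra hc
  push_neg at hc
  set e := edgeCount G with he
  have hn3 : m + 2 ≤ n := by omega
  have hdeg : ∀ v : V, e ≤ m + G.degree v := by
    intro v
    have hcard : (Finset.univ.erase v).card = n := by
      rw [Finset.card_erase_of_mem (Finset.mem_univ v), Finset.card_univ, hV]; omega
    have h1 := hG (Finset.univ.erase v) hcard
    have h2 := myKey G v
    omega
  have hsum : (n + 1) * e ≤ (n + 1) * m + 2 * e := by
    calc (n + 1) * e = ∑ _v : V, e := by
          rw [Finset.sum_const, Finset.card_univ, hV, smul_eq_mul]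
    _ ≤ ∑ v : V, (m + G.degree v) := Finset.sum_le_sum fun v _ => hdeg v
    _ = (n + 1) * m + 2 * G.edgeFinset.card := by
        rw [Finset.sum_add_distrib, Finset.sum_const, Finset.card_univ, hV, smul_eq_mul,
          G.sum_degrees_eq_twice_card_edges]
    _ = (n + 1) * m + 2 * e := by rw [he, myEdgeCount_eq]
  nlinarith [hsum, hc, hn3]
end

section
/- Let p, m, n be positive integers with p ≥ n ≥ m + 2. If G is an (n,m) graph of order p, then at least one connected component of G is a tree (i.e., G has a connected component containing no cycle). -/
open SimpleGraph

namespace Stmt13Aux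


variable {V : Type*}

/-- the edges of the induced subgraph, seen as edges of the ambient graph -/
def indSet (G : SimpleGraph V) (s : Set V) : Set (Sym2 V) :=
  (Sym2.map (Subtype.val : s → V)) '' (G.induce s).edgeSet

lemma mem_indSet {G : SimpleGraph V} {s : Set V} {e : Sym2 V} :
    e ∈ indSet G s ↔ e ∈ G.edgeSet ∧ ∀ v ∈ e, v ∈ s := by
  constructor
  · rintro ⟨e', he', rfl⟩
    induction e' using Sym2.ind with
    | _ a b =>
      rw [SimpleGraph.mem_edgeSet] at he'
      refine ⟨he', ?_⟩
      intro v hv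
      rw [Sym2.map_pair_eq, Sym2.mem_iff] at hv
      rcases hv with rfl | rfl
      · exact a.2
      · exact b.2
  · rintro ⟨he, hv⟩
    induction e using Sym2.ind with
    | _ a b =>
      refine ⟨s(⟨a, hv a (by simp)⟩, ⟨b, hv b (by simp)⟩), ?_, by simp⟩
      rwa [SimpleGraph.mem_edgeSet]

lemma edgeCount_induce (G : SimpleGraph V) (s : Set V) :
    edgeCount (G.induce s) = (indSet G s).ncard := by
  rw [edgeCount, indSet, Nat.card_coe_set_eq,
    Set.ncard_image_of_injective _ (Sym2.map.injective Subtype.val_injective)]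

variable [Fintype V]

lemma edgeCount_induce_mono (G : SimpleGraph V) {s t : Set V} (h : s ⊆ t) :
    edgeCount (G.induce s) ≤ edgeCount (G.induce t) := by
  rw [edgeCount_induce, edgeCount_induce]
  exact Set.ncard_le_ncard (fun e he => by
    rw [mem_indSet] at he ⊢
    exact ⟨he.1, fun v hv => h (he.2 v hv)⟩) (Set.toFinite _)

lemma edgeCount_induce_union (G : SimpleGraph V) {s t : Set V} (h : Disjoint s t) :
    edgeCount (G.induce s) + edgeCount (G.induce t) ≤ edgeCount (G.induce (s ∪ t)) := by
  rw [edgeCount_induce, edgeCount_induce, edgeCount_induce]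
  have hd : Disjoint (indSet G s) (indSet G t) := by
    rw [Set.disjoint_left]
    intro e hes het
    rw [mem_indSet] at hes het
    induction e using Sym2.ind with
    | _ a b =>
      exact Set.disjoint_left.mp h (hes.2 a (by simp)) (het.2 a (by simp))
  rw [← Set.ncard_union_eq hd (Set.toFinite _) (Set.toFinite _)]
  exact Set.ncard_le_ncard (fun e he => by
    rcases he with he | he <;> rw [mem_indSet] at he ⊢
    · exact ⟨he.1, fun v hv => Or.inl (he.2 v hv)⟩
    · exact ⟨he.1, fun v hv => Or.inr (he.2 v hv)⟩) (Set.toFinite _)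

lemma edgeCount_induce_insert (G : SimpleGraph V) {s : Set V} {u v : V}
    (hu : u ∈ s) (hv : v ∉ s) (hadj : G.Adj u v) :
    edgeCount (G.induce s) + 1 ≤ edgeCount (G.induce (insert v s)) := by
  rw [edgeCount_induce, edgeCount_induce]
  have hne : s(u, v) ∉ indSet G s := by
    rw [mem_indSet]
    rintro ⟨-, h2⟩
    exact hv (h2 v (by simp))
  have hsub : insert s(u, v) (indSet G s) ⊆ indSet G (insert v s) := by
    rintro e (rfl | he)
    · rw [mem_indSet]
      refine ⟨hadj, ?_⟩
      intro w hw
      rw [Sym2.mem_iff] at hw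
      rcases hw with rfl | rfl
      · exact Or.inr hu
      · exact Or.inl rfl
    · rw [mem_indSet] at he ⊢
      exact ⟨he.1, fun w hw => Or.inr (he.2 w hw)⟩
  calc (indSet G s).ncard + 1 = (insert s(u, v) (indSet G s)).ncard := by
        rw [Set.ncard_insert_of_notMem hne (Set.toFinite _)]
    _ ≤ _ := Set.ncard_le_ncard hsub (Set.toFinite _)



lemma exists_adj_dist_lt {W : Type*} {H : SimpleGraph W} (h : H.Preconnected)
    {v root : W} (hv : v ≠ root) :
    ∃ u, H.Adj v u ∧ H.dist u root < H.dist v root := by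
  obtain ⟨p, hp⟩ := (h v root).exists_walk_length_eq_dist
  cases p with
  | nil => exact absurd rfl hv
  | cons h' q =>
    refine ⟨_, h', ?_⟩
    have := SimpleGraph.dist_le q
    rw [Walk.length_cons] at hp
    omega

lemma card_le_edgeCount_of_connected {W : Type*} [Fintype W] {H : SimpleGraph W}
    (h : H.Connected) : Fintype.card W ≤ Nat.card H.edgeSet + 1 := by
  classical
  obtain ⟨root⟩ := h.nonempty
  have key : ∀ v : {v : W // v ≠ root}, ∃ u, H.Adj v.1 u ∧ H.dist u root < H.dist v.1 root :=
    fun v => exists_adj_dist_lt h.preconnected v.2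
  choose f hadj hdist using key
  have hinj : Function.Injective (fun v : {v : W // v ≠ root} =>
      (⟨s(v.1, f v), (hadj v)⟩ : H.edgeSet)) := by
    intro a b hab
    have hab := congrArg Subtype.val hab
    simp only [Sym2.eq_iff] at hab
    rcases hab with ⟨h1, -⟩ | ⟨h1, h2⟩
    · exact Subtype.ext h1
    · exfalso
      have ha := hdist a
      have hb := hdist b
      rw [h2] at ha
      rw [← h1] at hb
      omega
  have hle := Nat.card_le_card_of_injective _ hinj
  rw [Nat.card_eq_fintype_card (α := {v : W // v ≠ root})] at hle
  have hee : Nat.card {x // x ∈ H.edgeSet} = Nat.card H.edgeSet := rfl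
  rw [hee] at hle
  have hc : Fintype.card {v : W // v ≠ root} = Fintype.card W - 1 := by
    rw [Fintype.card_subtype_compl (p := fun v => v = root), Fintype.card_subtype_eq]
  have hpos : 0 < Fintype.card W := Fintype.card_pos_iff.mpr ⟨root⟩
  omega

lemma card_le_edgeCount_of_cycle {W : Type*} [Fintype W] {H : SimpleGraph W}
    (hc : H.Connected) (hnac : ¬ H.IsAcyclic) : Fintype.card W ≤ Nat.card H.edgeSet := by
  rw [isAcyclic_iff_forall_adj_isBridge] at hnac
  push_neg at hnac
  obtain ⟨v, w, hadj, hnb⟩ := hnac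
  rw [isBridge_iff] at hnb
  push_neg at hnb
  have hreach : (H \ fromEdgeSet {s(v, w)}).Reachable v w := hnb
  set H' : SimpleGraph W := H \ fromEdgeSet {s(v, w)} with hH'
  have hadjreach : ∀ a b : W, H.Adj a b → H'.Reachable a b := by
    intro a b hab
    by_cases he : s(a, b) = s(v, w)
    · rw [Sym2.eq_iff] at he
      rcases he with ⟨rfl, rfl⟩ | ⟨rfl, rfl⟩
      · exact hreach
      · exact hreach.symm
    · refine SimpleGraph.Adj.reachable ?_
      rw [hH', sdiff_adj, fromEdgeSet_adj]
      exact ⟨hab, fun hh => he hh.1⟩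
  haveI : Nonempty W := hc.nonempty
  have hconn : H'.Connected := by
    refine Connected.mk ?_
    intro x y
    obtain ⟨p⟩ := hc.preconnected x y
    induction p with
    | nil => exact Reachable.refl _
    | cons h' q ih => exact (hadjreach _ _ h').trans ih
  have hE : H'.edgeSet = H.edgeSet \ {s(v, w)} := by
    rw [hH', edgeSet_sdiff, edgeSet_fromEdgeSet, edgeSet_sdiff_sdiff_isDiag]
  have hcard : Nat.card H'.edgeSet = Nat.card H.edgeSet - 1 := by
    rw [Nat.card_coe_set_eq, Nat.card_coe_set_eq, hE]
    exact Set.ncard_diff_singleton_of_mem (H.mem_edgeSet.mpr hadj)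
  have hmem : (0 : ℕ) < Nat.card H.edgeSet := by
    rw [Nat.card_coe_set_eq]
    exact (Set.ncard_pos (Set.toFinite _)).mpr ⟨s(v, w), H.mem_edgeSet.mpr hadj⟩
  have := card_le_edgeCount_of_connected hconn
  omega


lemma connected_induce_supp {V : Type*} {G : SimpleGraph V} (c : G.ConnectedComponent) :
    (G.induce c.supp).Connected := by
  obtain ⟨u, hu⟩ := c.exists_rep
  classical
  have hus : u ∈ c.supp := by rw [ConnectedComponent.mem_supp_iff]; exact hu
  apply G.induce_connected_of_patches u hus
  intro v hv
  have hreach : G.Reachable u v := by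
    rw [ConnectedComponent.mem_supp_iff, ← hu] at hv
    exact (ConnectedComponent.exact hv).symm
  obtain ⟨p⟩ := hreach
  refine ⟨{x | x ∈ p.support}, ?_, p.start_mem_support, p.end_mem_support, ?_⟩
  · intro x hx
    have : G.Reachable u x := (p.takeUntil x hx).reachable
    rw [ConnectedComponent.mem_supp_iff, ← hu]
    exact (ConnectedComponent.sound this).symm
  · exact p.connected_induce_support.preconnected _ _

lemma supp_card_le_edgeCount {V : Type*} [Fintype V] {G : SimpleGraph V}
    (c : G.ConnectedComponent) (hnac : ¬ (G.induce c.supp).IsAcyclic) :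
    c.supp.ncard ≤ edgeCount (G.induce c.supp) := by
  classical
  have h1 := card_le_edgeCount_of_cycle (connected_induce_supp c) hnac
  rw [edgeCount]
  have h2 : c.supp.ncard = Fintype.card ↥c.supp := by
    rw [← Nat.card_coe_set_eq, Nat.card_eq_fintype_card]
  omega

lemma closed_card_le_edgeCount {V : Type*} [Fintype V] {G : SimpleGraph V}
    (hcyc : ∀ c : G.ConnectedComponent, ¬ (G.induce c.supp).IsAcyclic)
    (s : Finset V) (hcl : ∀ u ∈ s, ∀ v, G.Adj u v → v ∈ s) :
    s.card ≤ edgeCount (G.induce (↑s : Set V)) := by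
  classical
  induction s using Finset.strongInduction with
  | _ s ih =>
    rcases s.eq_empty_or_nonempty with rfl | ⟨v, hv⟩
    · simp
    · have hwalk : ∀ ⦃a b : V⦄ (p : G.Walk a b), a ∈ s → b ∈ s := by
        intro a b p
        induction p with
        | nil => exact id
        | cons h q ihq => exact fun ha => ihq (hcl _ ha _ h)
      set c := G.connectedComponentMk v with hc
      have hCs : c.supp ⊆ (↑s : Set V) := by
        intro w hw
        rw [ConnectedComponent.mem_supp_iff, hc] at hw
        obtain ⟨p⟩ := ConnectedComponent.exact hw
        exact hwalk p.reverse hv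
      set t : Finset V := (c.supp.toFinite).toFinset with ht
      have htc : (↑t : Set V) = c.supp := Set.Finite.coe_toFinset _
      have hts : t ⊆ s := by
        intro x hx
        have : x ∈ c.supp := by rwa [← htc]
        exact hCs this
      have hvt : v ∈ t := by
        rw [← Finset.mem_coe, htc, ConnectedComponent.mem_supp_iff, hc]
      -- t is bounded by its edges
      have h1 : t.card ≤ edgeCount (G.induce (↑t : Set V)) := by
        rw [htc]
        have := supp_card_le_edgeCount c (hcyc c)
        have hcard : c.supp.ncard = t.card := by
          rw [ht, Set.ncard_eq_toFinset_card c.supp (c.supp.toFinite)]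
        omega
      -- s \ t is closed and smaller
      have hcl' : ∀ u ∈ s \ t, ∀ w, G.Adj u w → w ∈ s \ t := by
        intro u hu w hadj
        rw [Finset.mem_sdiff] at hu
        rw [Finset.mem_sdiff]
        refine ⟨hcl _ hu.1 _ hadj, fun hwt => hu.2 ?_⟩
        have hwc : w ∈ c.supp := by rwa [← htc, Finset.mem_coe]
        rw [ConnectedComponent.mem_supp_iff] at hwc
        have huc : u ∈ c.supp := by
          rw [ConnectedComponent.mem_supp_iff, ← hwc]
          exact SimpleGraph.ConnectedComponent.connectedComponentMk_eq_of_adj hadj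
        rwa [← htc, Finset.mem_coe] at huc
      have hss : s \ t ⊂ s := Finset.sdiff_ssubset (hts) ⟨v, hvt⟩
      have h2 := ih (s \ t) hss hcl'
      have h3 : Disjoint (↑t : Set V) (↑(s \ t) : Set V) := by
        rw [Set.disjoint_left]
        intro x hx hx'
        rw [Finset.mem_coe, Finset.mem_sdiff] at hx'
        exact hx'.2 hx
      have h4 := edgeCount_induce_mono G (s := (↑t : Set V) ∪ ↑(s \ t)) (t := (↑s : Set V))
        (by
          rintro x (hx | hx)
          · exact hts hx
          · rw [Finset.mem_coe, Finset.mem_sdiff] at hx; exact hx.1)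
      have h5 := edgeCount_induce_union G h3
      have h6 : t.card + (s \ t).card = s.card := by
        rw [Finset.card_sdiff_of_subset hts]
        have := Finset.card_le_card hts
        omega
      omega

lemma greedy {V : Type*} [Fintype V] {G : SimpleGraph V}
    (hcyc : ∀ c : G.ConnectedComponent, ¬ (G.induce c.supp).IsAcyclic) :
    ∀ k, k ≤ Fintype.card V →
      ∃ s : Finset V, s.card = k ∧ k - 1 ≤ edgeCount (G.induce (↑s : Set V)) := by
  classical
  intro k
  induction k with
  | zero => exact fun _ => ⟨∅, by simp⟩
  | succ k ihk =>
    intro hk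
    obtain ⟨s, hcard, hedge⟩ := ihk (by omega)
    have : ∃ v, v ∉ s := by
      by_contra h
      push_neg at h
      have : s = Finset.univ := Finset.eq_univ_iff_forall.mpr h
      rw [this, Finset.card_univ] at hcard
      omega
    by_cases hop : ∃ u ∈ s, ∃ v, v ∉ s ∧ G.Adj u v
    · obtain ⟨u, hu, v, hvs, hadj⟩ := hop
      refine ⟨insert v s, ?_, ?_⟩
      · rw [Finset.card_insert_of_notMem hvs, hcard]
      · have h1 := edgeCount_induce_insert G (s := (↑s : Set V)) hu hvs hadj
        have hk1 : 1 ≤ k := by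
          by_contra h
          push_neg at h
          interval_cases k
          rw [Finset.card_eq_zero] at hcard
          subst hcard
          simp at hu
        have : ((insert v s : Finset V) : Set V) = insert v (↑s : Set V) := by
          simp
        rw [this]
        omega
    · -- s is closed
      push_neg at hop
      have hcl : ∀ u ∈ s, ∀ w, G.Adj u w → w ∈ s := by
        intro u hu w hadj
        by_contra hw
        exact (hop u hu w hw) hadj
      have hbound := closed_card_le_edgeCount hcyc s hcl
      obtain ⟨v, hvs⟩ := this
      refine ⟨insert v s, ?_, ?_⟩
      · rw [Finset.card_insert_of_notMem hvs, hcard]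
      · have : ((insert v s : Finset V) : Set V) = insert v (↑s : Set V) := by simp
        rw [this]
        have := edgeCount_induce_mono G (s := (↑s : Set V)) (t := insert v (↑s : Set V))
          (Set.subset_insert _ _)
        omega

end Stmt13Aux

theorem stmt_13 (p m n : ℕ) (hm0 : 0 < m) (hmn : m + 2 ≤ n) (hnp : n ≤ p)
    {V : Type*} [Fintype V] (hV : Fintype.card V = p) (G : SimpleGraph V)
    (hG : IsNMGraph n m G) :
    ∃ c : G.ConnectedComponent, (G.induce c.supp).IsAcyclic := by
  by_contra h
  push_neg at h
  have hcyc : ∀ c : G.ConnectedComponent, ¬ (G.induce c.supp).IsAcyclic := h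
  obtain ⟨s, hcard, hedge⟩ := Stmt13Aux.greedy hcyc n (by rw [hV]; exact hnp)
  have := hG s hcard
  omega
end

section
/- Let p, n, t be positive integers with 2 ≤ t ≤ n/2 + 2 and p ≥ n ≥ 4. If G is an (n, n−t) graph of order p, then α(G) ≥ ⌊(p − ⌊(n+4−2t)/3⌋)/2⌋ + 1. -/
open SimpleGraph

section AuxStmt15

open SimpleGraph Finset

variable {V : Type*} [DecidableEq V]

/-- degree of `v` within the finset `s`. -/
private def degS (G : SimpleGraph V) [DecidableRel G.Adj] (s : Finset V) (v : V) : ℕ :=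
  (s.filter (G.Adj v)).card

/-- sum over `s` of degrees within `s` (twice the number of edges inside `s`). -/
private def dsum (G : SimpleGraph V) [DecidableRel G.Adj] (s : Finset V) : ℕ :=
  ∑ v ∈ s, degS G s v

variable (G : SimpleGraph V) [DecidableRel G.Adj]

private lemma dsum_eq_twice_edgeCount (s : Finset V) :
    dsum G s = 2 * edgeCount (G.induce (↑s : Set V)) := by
  classical
  set H : SimpleGraph (↑s : Set V) := G.induce (↑s : Set V) with hH
  have h1 : edgeCount H = H.edgeFinset.card := by
    rw [edgeCount, Nat.card_eq_fintype_card, ← SimpleGraph.edgeFinset_card]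
  have h2 : ∑ v, H.degree v = 2 * H.edgeFinset.card := H.sum_degrees_eq_twice_card_edges
  have h3 : ∀ v : (↑s : Set V), H.degree v = degS G s v := by
    intro v
    rw [← card_neighborFinset_eq_degree, neighborFinset_eq_filter, degS]
    have himg : s.filter (G.Adj ↑v) =
        Finset.image (Subtype.val) (Finset.univ.filter (fun w => H.Adj v w)) := by
      ext u
      simp only [Finset.mem_filter, Finset.mem_image, Finset.mem_univ, true_and]
      constructor
      · rintro ⟨hus, hadj⟩
        exact ⟨⟨u, by simpa using hus⟩, hadj, rfl⟩
      · rintro ⟨w, hadj, rfl⟩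
        exact ⟨by simpa using w.2, hadj⟩
    rw [himg, Finset.card_image_of_injective _ Subtype.val_injective]
  have h4 : ∑ v, H.degree v = ∑ v : (↑s : Set V), degS G s ↑v :=
    Finset.sum_congr rfl (fun v _ => h3 v)
  have h5 : ∑ v : (↑s : Set V), degS G s ↑v = ∑ v ∈ s, degS G s v :=
    Finset.sum_coe_sort s (degS G s)
  rw [dsum, ← h5, ← h4, h2, h1]

private lemma degS_mono {s w : Finset V} (h : s ⊆ w) (v : V) : degS G s v ≤ degS G w v :=
  Finset.card_le_card (Finset.filter_subset_filter _ h)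

private lemma dsum_mono {s w : Finset V} (h : s ⊆ w) : dsum G s ≤ dsum G w := by
  calc dsum G s = ∑ v ∈ s, degS G s v := rfl
    _ ≤ ∑ v ∈ s, degS G w v := Finset.sum_le_sum (fun v _ => degS_mono G h v)
    _ ≤ ∑ v ∈ w, degS G w v := Finset.sum_le_sum_of_subset h

private lemma dsum_sdiff_le {R s : Finset V} (hR : R ⊆ s) :
    dsum G (s \ R) + ∑ u ∈ R, degS G s u ≤ dsum G s := by
  have h1 : dsum G s = ∑ v ∈ s \ R, degS G s v + ∑ v ∈ R, degS G s v :=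
    (Finset.sum_sdiff hR).symm
  have h2 : dsum G (s \ R) ≤ ∑ v ∈ s \ R, degS G s v :=
    Finset.sum_le_sum (fun v _ => degS_mono G (Finset.sdiff_subset) v)
  omega

private lemma dsum_insert_ge {w : Finset V} {u v : V} (hu : u ∈ w) (hv : v ∉ w)
    (hadj : G.Adj u v) : dsum G w + 2 ≤ dsum G (insert v w) := by
  have h1 : 1 ≤ degS G (insert v w) v := by
    have : u ∈ (insert v w).filter (G.Adj v) :=
      Finset.mem_filter.2 ⟨Finset.mem_insert_of_mem hu, hadj.symm⟩
    exact Finset.card_pos.2 ⟨u, this⟩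
  have h3 : degS G w u < degS G (insert v w) u := by
    apply Finset.card_lt_card
    constructor
    · exact Finset.filter_subset_filter _ (Finset.subset_insert _ _)
    · intro hsub
      have hvmem : v ∈ (insert v w).filter (G.Adj u) :=
        Finset.mem_filter.2 ⟨Finset.mem_insert_self _ _, hadj⟩
      have := hsub hvmem
      exact hv (Finset.mem_filter.1 this).1
  have h4 : dsum G w < ∑ x ∈ w, degS G (insert v w) x :=
    Finset.sum_lt_sum (fun x _ => degS_mono G (Finset.subset_insert _ _) x) ⟨u, hu, h3⟩
  have h5 : dsum G (insert v w) = degS G (insert v w) v + ∑ x ∈ w, degS G (insert v w) x := by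
    rw [dsum, Finset.sum_insert hv]
  omega

private lemma indep_insert {a : Finset V} {u : V} (hai : IsIndepFinset G a)
    (hnadj : ∀ y ∈ a, ¬ G.Adj u y) (hua : u ∉ a) : IsIndepFinset G (insert u a) := by
  intro x hx y hy hxy
  rcases Finset.mem_insert.1 hx with rfl | hx' <;> rcases Finset.mem_insert.1 hy with rfl | hy'
  · exact absurd rfl hxy
  · exact hnadj y hy'
  · exact fun h => hnadj x hx' h.symm
  · exact hai x hx' y hy' hxy

/-- Greedy minimum-degree bound: any finset `s` contains an independent set `a`
with `4|s| ≤ 6|a| + dsum s`  (i.e. `α ≥ (2v - e)/3`). -/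
private lemma indepL : ∀ (N : ℕ) (s : Finset V), s.card ≤ N →
    ∃ a, a ⊆ s ∧ IsIndepFinset G a ∧ 4 * s.card ≤ 6 * a.card + dsum G s := by
  intro N
  induction N with
  | zero =>
    intro s hs
    have : s.card = 0 := Nat.le_zero.1 hs
    exact ⟨∅, Finset.empty_subset _, fun u hu => absurd hu (Finset.notMem_empty u), by omega⟩
  | succ N IH =>
    intro s hs
    rcases Finset.eq_empty_or_nonempty s with rfl | hne
    · exact ⟨∅, Finset.empty_subset _, fun u hu => absurd hu (Finset.notMem_empty u), by simp⟩
    obtain ⟨v, hv, hmin⟩ := Finset.exists_min_image s (degS G s) hne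
    set d := degS G s v with hd
    set R := insert v (s.filter (G.Adj v)) with hRdef
    have hRs : R ⊆ s := Finset.insert_subset hv (Finset.filter_subset _ _)
    have hvnf : v ∉ s.filter (G.Adj v) := by
      simp only [Finset.mem_filter]
      exact fun h => G.irrefl h.2
    have hRcard : R.card = d + 1 := by
      rw [hRdef, Finset.card_insert_of_notMem hvnf]
      rfl
    set s' := s \ R with hs'def
    have hcard : s'.card + (d + 1) = s.card := by
      rw [hs'def, ← hRcard]
      exact Finset.card_sdiff_add_card_eq_card hRs
    have hvpos : 1 ≤ s.card := Finset.card_pos.2 hne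
    obtain ⟨a', ha's, ha'i, ha'⟩ := IH s' (by omega)
    have hva' : v ∉ a' := by
      intro h
      have := ha's h
      rw [hs'def, Finset.mem_sdiff] at this
      exact this.2 (Finset.mem_insert_self _ _)
    refine ⟨insert v a', ?_, ?_, ?_⟩
    · exact Finset.insert_subset hv (ha's.trans (Finset.sdiff_subset))
    · apply indep_insert G ha'i _ hva'
      intro y hy hadj
      have hys' := ha's hy
      rw [hs'def, Finset.mem_sdiff] at hys'
      exact hys'.2 (Finset.mem_insert_of_mem
        (Finset.mem_filter.2 ⟨hys'.1, hadj⟩))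
    · have hsum : (d + 1) * d ≤ ∑ u ∈ R, degS G s u := by
        have : ∀ u ∈ R, d ≤ degS G s u := fun u hu => hmin u (hRs hu)
        calc (d + 1) * d = R.card * d := by rw [hRcard]
          _ ≤ ∑ u ∈ R, degS G s u := by
              simpa using Finset.card_nsmul_le_sum R (degS G s) d this
      have hkey := dsum_sdiff_le G hRs
      have hcard2 : (insert v a').card = a'.card + 1 := Finset.card_insert_of_notMem hva'
      have hdd : 4 * d ≤ (d + 1) * d + 2 := by
        rcases Nat.lt_or_ge d 3 with h | h
        · interval_cases d <;> omega
        · have : 4 * d ≤ (d + 1) * d := Nat.mul_le_mul_right d (by omega)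
          omega
      set k := (d + 1) * d
      set D := dsum G s
      set D' := dsum G s'
      omega

/-- In an `(n, n-t)` graph with `t ≥ 2`, every vertex set of size at least `n`
contains a vertex of (inner) degree at most `1`. -/
private lemma exists_low_deg {n t : ℕ} (ht2 : 2 ≤ t) (htn : t ≤ n)
    (Hds : ∀ w : Finset V, w.card = n → dsum G w ≤ 2 * (n - t))
    (s : Finset V) (hns : n ≤ s.card) : ∃ u ∈ s, degS G s u ≤ 1 := by
  by_contra hcon
  push_neg at hcon
  have grow : ∀ r, r ≤ n → ∃ w, w ⊆ s ∧ w.card = r ∧ 2 * r ≤ dsum G w + 2 := by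
    intro r
    induction r with
    | zero => exact fun _ => ⟨∅, Finset.empty_subset _, Finset.card_empty, by simp⟩
    | succ r IH =>
      intro hr
      obtain ⟨w, hws, hwc, hwd⟩ := IH (by omega)
      rcases Nat.lt_or_ge (dsum G w) (2 * r) with hsm | hbig
      · have hw1 : ∃ u ∈ w, degS G w u ≤ 1 := by
          by_contra h2
          push_neg at h2
          have : ∀ u ∈ w, 2 ≤ degS G w u := fun u hu => h2 u hu
          have hsum : w.card * 2 ≤ dsum G w := by
            simpa [dsum] using Finset.card_nsmul_le_sum w (degS G w) 2 this
          omega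
        obtain ⟨u, huw, hu1⟩ := hw1
        have hus : u ∈ s := hws huw
        have h2 : 2 ≤ degS G s u := hcon u hus
        have hsub : w.filter (G.Adj u) ⊆ s.filter (G.Adj u) :=
          Finset.filter_subset_filter _ hws
        have hne : (s.filter (G.Adj u) \ w.filter (G.Adj u)).Nonempty := by
          rw [← Finset.card_pos, Finset.card_sdiff_of_subset hsub]
          have := Finset.card_le_card hsub
          unfold degS at h2 hu1
          omega
        obtain ⟨v, hv⟩ := hne
        rw [Finset.mem_sdiff, Finset.mem_filter] at hv
        obtain ⟨⟨hvs, hadj⟩, hvnf⟩ := hv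
        have hvw : v ∉ w := fun h => hvnf (Finset.mem_filter.2 ⟨h, hadj⟩)
        refine ⟨insert v w, Finset.insert_subset hvs hws, ?_, ?_⟩
        · rw [Finset.card_insert_of_notMem hvw, hwc]
        · have := dsum_insert_ge G huw hvw hadj
          omega
      · have hlt : w.card < s.card := by omega
        have : (s \ w).Nonempty := by
          rw [← Finset.card_pos, Finset.card_sdiff_of_subset hws]
          omega
        obtain ⟨v, hv⟩ := this
        rw [Finset.mem_sdiff] at hv
        refine ⟨insert v w, Finset.insert_subset hv.1 hws, ?_, ?_⟩
        · rw [Finset.card_insert_of_notMem hv.2, hwc]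
        · have := dsum_mono G (Finset.subset_insert v w)
          omega
  obtain ⟨w, hws, hwc, hwd⟩ := grow n le_rfl
  have := Hds w hwc
  omega

/-- Main induction: leaf removal plus the greedy bound at the base. -/
private lemma mainlem {n t : ℕ} (hn : 4 ≤ n) (ht2 : 2 ≤ t) (htn : 2 * t ≤ n + 4)
    (Hds : ∀ w : Finset V, w.card = n → dsum G w ≤ 2 * (n - t)) :
    ∀ (N : ℕ) (s : Finset V), s.card ≤ N → n ≤ s.card →
    ∃ a, a ⊆ s ∧ IsIndepFinset G a ∧ (s.card - (n + 4 - 2 * t) / 3) / 2 + 1 ≤ a.card := by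
  have htn' : t ≤ n := by omega
  intro N
  induction N with
  | zero => intro s h0 hn0; omega
  | succ N IH =>
    intro s hsN hns
    rcases eq_or_lt_of_le hns with heq | hlt
    · obtain ⟨a, has, hai, ha⟩ := indepL G s.card s le_rfl
      have hds := Hds s heq.symm
      exact ⟨a, has, hai, by omega⟩
    · obtain ⟨u, hu, hdu⟩ := exists_low_deg G ht2 htn' Hds s (le_of_lt hlt)
      rcases Nat.le_one_iff_eq_zero_or_eq_one.1 hdu with h0 | h1
      · -- degree 0 : remove u, recurse
        set s' := s.erase u with hs'def
        have hc : s'.card + 1 = s.card := by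
          rw [hs'def, Finset.card_erase_of_mem hu]
          have : 1 ≤ s.card := Finset.card_pos.2 ⟨u, hu⟩
          omega
        obtain ⟨a', ha's, ha'i, ha'⟩ := IH s' (by omega) (by omega)
        have hua' : u ∉ a' := fun h => (Finset.notMem_erase u s) (ha's h)
        have hnadj : ∀ y ∈ a', ¬ G.Adj u y := by
          intro y hy hadj
          have hys : y ∈ s := (Finset.erase_subset u s) (ha's hy)
          have hmem : y ∈ s.filter (G.Adj u) := Finset.mem_filter.2 ⟨hys, hadj⟩
          have : (s.filter (G.Adj u)).card ≠ 0 := Finset.card_ne_zero_of_mem hmem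
          exact this h0
        refine ⟨insert u a', Finset.insert_subset hu (ha's.trans (Finset.erase_subset u s)),
          indep_insert G ha'i hnadj hua', ?_⟩
        rw [Finset.card_insert_of_notMem hua']
        omega
      · -- degree 1 : unique neighbor x, remove u and x
        obtain ⟨x, hx⟩ := Finset.card_eq_one.1 h1
        have hxmem : x ∈ s.filter (G.Adj u) := by rw [hx]; exact Finset.mem_singleton_self x
        rw [Finset.mem_filter] at hxmem
        obtain ⟨hxs, hadjux⟩ := hxmem
        have hux : u ≠ x := fun h => G.irrefl (h ▸ hadjux)
        have hno : ∀ y ∈ s, y ≠ x → ¬ G.Adj u y := by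
          intro y hys hyx hadj
          have : y ∈ s.filter (G.Adj u) := Finset.mem_filter.2 ⟨hys, hadj⟩
          rw [hx, Finset.mem_singleton] at this
          exact hyx this
        set s' := s \ {u, x} with hs'def
        have hpair : ({u, x} : Finset V) ⊆ s := by
          intro y hy
          rcases Finset.mem_insert.1 hy with rfl | hy'
          · exact hu
          · rw [Finset.mem_singleton] at hy'; exact hy' ▸ hxs
        have hpc : ({u, x} : Finset V).card = 2 := by
          rw [Finset.card_insert_of_notMem (by simpa using hux), Finset.card_singleton]
        have hc : s'.card + 2 = s.card := by
          rw [hs'def, ← hpc]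
          exact Finset.card_sdiff_add_card_eq_card hpair
        have hs'sub : s' ⊆ s := Finset.sdiff_subset
        have hus' : u ∉ s' := by
          rw [hs'def, Finset.mem_sdiff]
          rintro ⟨-, h⟩
          exact h (Finset.mem_insert_self u {x})
        have getA : ∀ a' : Finset V, a' ⊆ s' → IsIndepFinset G a' →
            ∃ a, a ⊆ s ∧ IsIndepFinset G a ∧ a.card = a'.card + 1 := by
          intro a' ha's ha'i
          have hua' : u ∉ a' := fun h => hus' (ha's h)
          have hnadj : ∀ y ∈ a', ¬ G.Adj u y := by
            intro y hy hadj
            have hys' := ha's hy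
            rw [hs'def, Finset.mem_sdiff] at hys'
            have hyx : y ≠ x := by
              intro h
              exact hys'.2 (by rw [h]; exact Finset.mem_insert_of_mem (Finset.mem_singleton_self x))
            exact hno y hys'.1 hyx hadj
          exact ⟨insert u a', Finset.insert_subset hu (ha's.trans hs'sub),
            indep_insert G ha'i hnadj hua', Finset.card_insert_of_notMem hua'⟩
        rcases Nat.lt_or_ge s.card (n + 2) with hP | hP
        · -- s.card = n + 1 : base via the greedy bound on s'
          obtain ⟨a', ha's, ha'i, ha'⟩ := indepL G s'.card s' le_rfl
          have hds' : dsum G s' ≤ 2 * (n - t) := by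
            have h1 : s' ⊆ s.erase u := by
              intro y hy
              rw [hs'def, Finset.mem_sdiff] at hy
              exact Finset.mem_erase.2 ⟨fun h => hy.2 (h ▸ Finset.mem_insert_self u {x}), hy.1⟩
            have h2 : (s.erase u).card = n := by
              rw [Finset.card_erase_of_mem hu]
              omega
            exact le_trans (dsum_mono G h1) (Hds _ h2)
          obtain ⟨a, has, hai, hac⟩ := getA a' ha's ha'i
          exact ⟨a, has, hai, by omega⟩
        · obtain ⟨a', ha's, ha'i, ha'⟩ := IH s' (by omega) (by omega)
          obtain ⟨a, has, hai, hac⟩ := getA a' ha's ha'i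
          exact ⟨a, has, hai, by omega⟩

end AuxStmt15

theorem stmt_15 (p n t : ℕ) (ht2 : 2 ≤ t) (ht : (t : ℚ) ≤ (n : ℚ) / 2 + 2)
    (hn : 4 ≤ n) (hnp : n ≤ p)
    {V : Type*} [Fintype V] (hV : Fintype.card V = p) (G : SimpleGraph V)
    (hG : IsNMGraph n (n - t) G) :
    (p - (n + 4 - 2 * t) / 3) / 2 + 1 ≤ indepNum' G := by
  classical
  letI : DecidableEq V := Classical.decEq V
  letI : DecidableRel G.Adj := Classical.decRel _
  have htn : 2 * t ≤ n + 4 := by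
    have h2 : (2 * t : ℚ) ≤ (n : ℚ) + 4 := by linarith
    exact_mod_cast h2
  have Hds : ∀ w : Finset V, w.card = n → dsum G w ≤ 2 * (n - t) := by
    intro w hw
    rw [dsum_eq_twice_edgeCount]
    exact Nat.mul_le_mul_left 2 (hG w hw)
  have hcard : n ≤ (Finset.univ : Finset V).card := by
    rw [Finset.card_univ, hV]; exact hnp
  obtain ⟨a, -, hai, ha⟩ :=
    mainlem G hn ht2 htn Hds (Finset.univ : Finset V).card Finset.univ le_rfl hcard
  have hpu : (Finset.univ : Finset V).card = p := by rw [Finset.card_univ, hV]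
  rw [hpu] at ha
  refine le_trans ha ?_
  apply le_csSup
  · refine ⟨Fintype.card V, ?_⟩
    rintro b ⟨s, -, rfl⟩
    exact (Finset.card_le_univ s).trans (le_of_eq Finset.card_univ)
  · exact ⟨a, hai, rfl⟩
end
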